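/- arXiv:2509.02526 — 8 statements merged into one kernel-verified Lean document; each statement's English description precedes it below -/
import Mathlib

section
/- Let (S, Σ, μ) be a probability space, let {κ_s}_{s ∈ S} be a family of Markov kernels from ℝ^d to ℝ^d such that (s, u) ↦ κ_s(u)(B) is jointly measurable for every Borel set B, let κ̄ be a Markov kernel from ℝ^d to ℝ^d, and let ε, δ ≥ 0. Assume that for every u ∈ ℝ^d, μ{ s ∈ S : d_TV(κ_s(u), κ̄(u)) ≤ ε } ≥ 1 − δ. Define the averaged kernel κ by κ(u)(B) := ∫_S κ_s(u)(B) dμ(s). Then for every u ∈ ℝ^d and every integer T ≥ 1, d_TV( κ^T(u), κ̄^T(u) ) ≤ T(δ + ε). -/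
/-!
A single step of the averaged kernel is already within `δ + ε` of `κ̄`: for a measurable set `E`,
`κ(u)(E) - κ̄(u)(E)` is the `μ`-average of `s ↦ κ_s(u)(E) - κ̄(u)(E)`, a function with values in
`[-1, 1]` that is at most `ε` in absolute value outside a set of `μ`-measure at most `δ`.
A common Markov kernel does not increase the total variation distance (by the layer cake formula,
integrals of a `[0, 1]`-valued function against two probability measures differ by at most their
distance), so by the triangle inequality every further step adds at most `δ + ε`.
-/

open MeasureTheory ProbabilityTheory

/-- Total variation distance between two measures: the supremum over measurable
sets `E` of `|μ E - ν E|` (values taken in `ℝ` via `toReal`). -/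
noncomputable def tvDist {X : Type*} [MeasurableSpace X] (μ ν : Measure X) : ℝ :=
  ⨆ E : {E : Set X // MeasurableSet E}, |(μ E.1).toReal - (ν E.1).toReal|

/-- Iterates of a (kernel-like) map `κ : X → Measure X`: `kIter κ 0 = κ` is the
one-step kernel `κ¹`, and `kIter κ T` is the `(T+1)`-fold iterate `κ^{T+1}`,
with `κ^{T+1}(u)(B) = ∫ κ(y)(B) d(κ^T(u))(y)`. -/
noncomputable def kIter {X : Type*} [MeasurableSpace X] (κ : X → Measure X) :
    ℕ → X → Measure X
  | 0 => κ
  | T + 1 => fun u => (kIter κ T u).bind κ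

section TotalVariation

variable {X : Type*} [MeasurableSpace X]

lemma abs_measureReal_sub_le_one (P Q : Measure X) [IsProbabilityMeasure P]
    [IsProbabilityMeasure Q] (E : Set X) : |P.real E - Q.real E| ≤ 1 :=
  abs_sub_le_of_nonneg_of_le measureReal_nonneg measureReal_le_one measureReal_nonneg
    measureReal_le_one

lemma le_tvDist {P Q : Measure X} [IsProbabilityMeasure P] [IsProbabilityMeasure Q]
    {E : Set X} (hE : MeasurableSet E) : |P.real E - Q.real E| ≤ tvDist P Q := by
  refine le_ciSup (f := fun E : {E : Set X // MeasurableSet E} => |P.real E - Q.real E|)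
    ⟨1, ?_⟩ ⟨E, hE⟩
  rintro _ ⟨E, rfl⟩
  exact abs_measureReal_sub_le_one P Q E

lemma tvDist_le {P Q : Measure X} {c : ℝ}
    (h : ∀ E, MeasurableSet E → |P.real E - Q.real E| ≤ c) : tvDist P Q ≤ c :=
  ciSup_le fun E => h E.1 E.2

lemma tvDist_triangle (P Q R : Measure X) [IsProbabilityMeasure P] [IsProbabilityMeasure Q]
    [IsProbabilityMeasure R] : tvDist P R ≤ tvDist P Q + tvDist Q R :=
  tvDist_le fun _ hE => (abs_sub_le _ _ _).trans (add_le_add (le_tvDist hE) (le_tvDist hE))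

lemma integral_eq_setIntegral_Ioc_measureReal_lt (P : Measure X) [IsFiniteMeasure P]
    {f : X → ℝ} (hf : Measurable f) (h0 : ∀ x, 0 ≤ f x) (h1 : ∀ x, f x ≤ 1) :
    ∫ x, f x ∂P = ∫ t in Set.Ioc 0 1, P.real {x | t < f x} := by
  have hint : Integrable f P :=
    .of_bound hf.aestronglyMeasurable 1 (ae_of_all _ fun x => by
      rw [Real.norm_eq_abs, abs_of_nonneg (h0 x)]; exact h1 x)
  rw [hint.integral_eq_integral_meas_lt (ae_of_all _ h0)]
  refine setIntegral_eq_of_subset_of_forall_sdiff_eq_zero measurableSet_Ioi Set.Ioc_subset_Ioi_self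
    fun t ht => ?_
  have ht1 : 1 < t := by simpa using ht
  have : {x | t < f x} = ∅ := Set.eq_empty_of_forall_notMem fun x hx => by
    linarith [h1 x, hx.out]
  simp [this]

lemma abs_integral_sub_integral_le_tvDist (P Q : Measure X) [IsProbabilityMeasure P]
    [IsProbabilityMeasure Q] {f : X → ℝ} (hf : Measurable f) (h0 : ∀ x, 0 ≤ f x)
    (h1 : ∀ x, f x ≤ 1) : |∫ x, f x ∂P - ∫ x, f x ∂Q| ≤ tvDist P Q := by
  have hint (R : Measure X) [IsProbabilityMeasure R] :
      IntegrableOn (fun t => R.real {x | t < f x}) (Set.Ioc 0 1) := by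
    have hanti : Antitone fun t => R.real {x | t < f x} := fun s t hst =>
      measureReal_mono fun x hx => hst.trans_lt hx
    exact .of_bound (by simp) hanti.measurable.aestronglyMeasurable 1 (ae_of_all _ fun t => by
      rw [Real.norm_eq_abs, abs_of_nonneg measureReal_nonneg]; exact measureReal_le_one)
  rw [integral_eq_setIntegral_Ioc_measureReal_lt P hf h0 h1,
    integral_eq_setIntegral_Ioc_measureReal_lt Q hf h0 h1, ← integral_sub (hint P) (hint Q),
    ← Real.norm_eq_abs]
  calc _ ≤ tvDist P Q * volume.real (Set.Ioc (0 : ℝ) 1) :=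
        norm_setIntegral_le_of_norm_le_const (by simp) fun t _ => le_tvDist (hf measurableSet_Ioi)
    _ = tvDist P Q := by simp

end TotalVariation

section Kernels

variable {S X Y : Type*} [MeasurableSpace S] [MeasurableSpace X] [MeasurableSpace Y]

lemma measureReal_bind_apply (P : Measure X) {κ : X → Measure Y} (hκ : Measurable κ)
    [∀ x, IsFiniteMeasure (κ x)] {E : Set Y} (hE : MeasurableSet E) :
    (P.bind κ).real E = ∫ x, (κ x).real E ∂P := by
  rw [Measure.real, Measure.bind_apply hE hκ.aemeasurable]
  exact (integral_toReal ((Measure.measurable_coe hE).comp hκ).aemeasurable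
    (ae_of_all _ fun x => measure_lt_top _ _)).symm

lemma integrable_measureReal_apply (P : Measure X) [IsFiniteMeasure P] {κ : X → Measure Y}
    (hκ : Measurable κ) [∀ x, IsProbabilityMeasure (κ x)] {E : Set Y} (hE : MeasurableSet E) :
    Integrable (fun x => (κ x).real E) P :=
  .of_bound ((Measure.measurable_coe hE).comp hκ).ennreal_toReal.aestronglyMeasurable 1
    (ae_of_all _ fun x => by
      rw [Real.norm_eq_abs, abs_of_nonneg measureReal_nonneg]; exact measureReal_le_one)

lemma abs_integral_le_of_measure_abs_le {μ : Measure S} [IsProbabilityMeasure μ] {g : S → ℝ}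
    (hg : Measurable g) (hg1 : ∀ s, |g s| ≤ 1) {ε δ : ℝ} (hε : 0 ≤ ε)
    (hgood : ENNReal.ofReal (1 - δ) ≤ μ {s | |g s| ≤ ε}) : |∫ s, g s ∂μ| ≤ δ + ε := by
  set good := {s | |g s| ≤ ε}
  have hmeas : MeasurableSet good := measurableSet_le hg.abs measurable_const
  have hbad : μ.real goodᶜ ≤ δ := by
    have h := (ENNReal.ofReal_le_iff_le_toReal (measure_ne_top μ good)).mp hgood
    rw [← measureReal_def] at h
    rw [probReal_compl_eq_one_sub hmeas]
    linarith
  have hind : Integrable (goodᶜ.indicator fun _ => (1 : ℝ)) μ :=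
    (integrable_const 1).indicator hmeas.compl
  have hpt : ∀ s, |g s| ≤ ε + goodᶜ.indicator (fun _ => 1) s := fun s => by
    by_cases hs : s ∈ good
    · simp [hs, hs.out]
    · simp only [Set.indicator_of_mem (Set.mem_compl hs)]; linarith [hg1 s]
  calc |∫ s, g s ∂μ| ≤ ∫ s, |g s| ∂μ := abs_integral_le_integral_abs
    _ ≤ ∫ s, (ε + goodᶜ.indicator (fun _ => 1) s) ∂μ :=
        integral_mono (.abs (.of_bound hg.aestronglyMeasurable 1 (ae_of_all _ hg1)))
          ((integrable_const ε).add hind) hpt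
    _ = ε + μ.real goodᶜ := by
        rw [integral_add (integrable_const ε) hind, integral_indicator_const _ hmeas.compl]; simp
    _ ≤ δ + ε := by linarith

lemma tvDist_bind_le {μ : Measure S} [IsProbabilityMeasure μ] {κ : S → Measure X}
    (hκ : Measurable κ) [∀ s, IsProbabilityMeasure (κ s)] {ν : Measure X}
    [IsProbabilityMeasure ν] {ε δ : ℝ} (hε : 0 ≤ ε)
    (hclose : ENNReal.ofReal (1 - δ) ≤ μ {s | tvDist (κ s) ν ≤ ε}) :
    tvDist (μ.bind κ) ν ≤ δ + ε := by
  refine tvDist_le fun E hE => ?_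
  have hdiff : (μ.bind κ).real E - ν.real E = ∫ s, ((κ s).real E - ν.real E) ∂μ := by
    rw [measureReal_bind_apply μ hκ hE,
      integral_sub (integrable_measureReal_apply μ hκ hE) (integrable_const _)]
    simp
  rw [hdiff]
  refine abs_integral_le_of_measure_abs_le
    (((Measure.measurable_coe hE).comp hκ).ennreal_toReal.sub measurable_const)
    (fun s => abs_measureReal_sub_le_one (κ s) ν E) hε (hclose.trans (measure_mono ?_))
  exact fun s hs => (le_tvDist hE).trans hs

lemma tvDist_comp_le (κ : Kernel X Y) [IsMarkovKernel κ] (P Q : Measure X)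
    [IsProbabilityMeasure P] [IsProbabilityMeasure Q] : tvDist (κ ∘ₘ P) (κ ∘ₘ Q) ≤ tvDist P Q :=
  tvDist_le fun E hE => by
    rw [measureReal_bind_apply P κ.measurable hE, measureReal_bind_apply Q κ.measurable hE]
    exact abs_integral_sub_integral_le_tvDist P Q (κ.measurable_coe hE).ennreal_toReal
      (fun _ => measureReal_nonneg) fun _ => measureReal_le_one

lemma tvDist_comp_le_of_forall_tvDist_le (κ η : Kernel X Y) [IsMarkovKernel κ]
    [IsMarkovKernel η] (P : Measure X) [IsProbabilityMeasure P] {c : ℝ}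
    (h : ∀ x, tvDist (κ x) (η x) ≤ c) : tvDist (κ ∘ₘ P) (η ∘ₘ P) ≤ c :=
  tvDist_le fun E hE => by
    rw [measureReal_bind_apply P κ.measurable hE, measureReal_bind_apply P η.measurable hE,
      ← integral_sub (integrable_measureReal_apply P κ.measurable hE)
        (integrable_measureReal_apply P η.measurable hE), ← Real.norm_eq_abs]
    simpa using norm_integral_le_of_norm_le_const (μ := P)
      (ae_of_all _ fun x => (Real.norm_eq_abs _).trans_le ((le_tvDist hE).trans (h x)))

end Kernels

section Iteration

variable {X : Type*} [MeasurableSpace X]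

instance isProbabilityMeasure_kIter (κ : Kernel X X) [IsMarkovKernel κ] (T : ℕ) (u : X) :
    IsProbabilityMeasure (kIter κ T u) := by
  induction T with
  | zero => exact inferInstanceAs (IsProbabilityMeasure (κ u))
  | succ T ih => exact inferInstanceAs (IsProbabilityMeasure (κ ∘ₘ kIter κ T u))

theorem tvDist_kIter_le (κ η : Kernel X X) [IsMarkovKernel κ] [IsMarkovKernel η] {c : ℝ}
    (h : ∀ x, tvDist (κ x) (η x) ≤ c) (T : ℕ) (u : X) :
    tvDist (kIter κ T u) (kIter η T u) ≤ (T + 1) * c := by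
  induction T with
  | zero => simpa [kIter] using h u
  | succ T ih =>
    calc tvDist (κ ∘ₘ kIter κ T u) (η ∘ₘ kIter η T u)
        ≤ tvDist (κ ∘ₘ kIter κ T u) (η ∘ₘ kIter κ T u)
          + tvDist (η ∘ₘ kIter κ T u) (η ∘ₘ kIter η T u) := tvDist_triangle _ _ _
      _ ≤ c + (T + 1) * c :=
        add_le_add (tvDist_comp_le_of_forall_tvDist_le κ η _ h) ((tvDist_comp_le η _ _).trans ih)
      _ = (↑(T + 1) + 1) * c := by push_cast; ring

end Iteration

section Mixture

variable {S X Y : Type*} [MeasurableSpace S] [MeasurableSpace X] [MeasurableSpace Y]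

def IsMeasurableKernelFamily (κ : S → Kernel X Y) : Prop :=
  ∀ B, MeasurableSet B → Measurable fun q : S × X => κ q.1 q.2 B

lemma IsMeasurableKernelFamily.measurable_apply {κ : S → Kernel X Y}
    (hκ : IsMeasurableKernelFamily κ) (x : X) : Measurable fun s => κ s x :=
  Measure.measurable_of_measurable_coe _ fun B hB => (hκ B hB).comp measurable_prodMk_right

noncomputable def mixtureKernel (μ : Measure S) [SFinite μ] (κ : S → Kernel X Y)
    (hκ : IsMeasurableKernelFamily κ) : Kernel X Y where
  toFun x := μ.bind fun s => κ s x
  measurable' := Measure.measurable_of_measurable_coe _ fun B hB => by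
    simp_rw [Measure.bind_apply hB (hκ.measurable_apply _).aemeasurable]
    exact (hκ B hB).lintegral_prod_left

lemma isMarkovKernel_mixtureKernel (μ : Measure S) [IsProbabilityMeasure μ]
    {κ : S → Kernel X Y} (hκ : IsMeasurableKernelFamily κ) [∀ s, IsMarkovKernel (κ s)] :
    IsMarkovKernel (mixtureKernel μ κ hκ) :=
  ⟨fun x => ⟨by
    simp [mixtureKernel, Measure.bind_apply .univ (hκ.measurable_apply x).aemeasurable]⟩⟩

end Mixture

theorem stmt2_general {d : ℕ} {S : Type*} [MeasurableSpace S]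
    (μ : Measure S) [IsProbabilityMeasure μ]
    (κ : S → ProbabilityTheory.Kernel (Fin d → ℝ) (Fin d → ℝ))
    (hκ : ∀ s, IsMarkovKernel (κ s))
    (hjoint : ∀ B : Set (Fin d → ℝ), MeasurableSet B →
      Measurable (fun q : S × (Fin d → ℝ) => κ q.1 q.2 B))
    (κbar : ProbabilityTheory.Kernel (Fin d → ℝ) (Fin d → ℝ)) [IsMarkovKernel κbar]
    (ε δ : ℝ) (hε : 0 ≤ ε)
    (hclose : ∀ u : Fin d → ℝ,
      ENNReal.ofReal (1 - δ) ≤ μ {s | tvDist (κ s u) (κbar u) ≤ ε}) :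
    ∀ (u : Fin d → ℝ) (T : ℕ), 1 ≤ T →
      tvDist (kIter (fun x => μ.bind (fun s => κ s x)) (T - 1) u)
          (kIter (fun x => κbar x) (T - 1) u)
        ≤ (T : ℝ) * (δ + ε) := by
  intro u T hT
  obtain ⟨T, rfl⟩ := Nat.exists_eq_add_of_le' hT
  have hfamily : IsMeasurableKernelFamily κ := hjoint
  have := isMarkovKernel_mixtureKernel μ hfamily
  have hstep (x : Fin d → ℝ) : tvDist (mixtureKernel μ κ hfamily x) (κbar x) ≤ δ + ε :=
    tvDist_bind_le (hfamily.measurable_apply x) hε (hclose x)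
  rw [Nat.add_sub_cancel, Nat.cast_add_one]
  exact tvDist_kIter_le _ κbar hstep T u

/-- Fresh-randomness composition lemma: if for every `u`, with probability at least
`1 - δ` over `s ∼ μ` we have `d_TV(κ_s(u), κ̄(u)) ≤ ε`, then the `T`-step iterate of
the averaged kernel `κ(u) = ∫ κ_s(u) dμ(s)` is within `T(δ + ε)` of the `T`-step
iterate of `κ̄` in total variation, for every starting point `u` and every `T ≥ 1`. -/
theorem stmt2 {d : ℕ} {S : Type*} [MeasurableSpace S]
    (μ : Measure S) [IsProbabilityMeasure μ]
    (κ : S → ProbabilityTheory.Kernel (Fin d → ℝ) (Fin d → ℝ))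
    (hκ : ∀ s, IsMarkovKernel (κ s))
    (hjoint : ∀ B : Set (Fin d → ℝ), MeasurableSet B →
      Measurable (fun q : S × (Fin d → ℝ) => κ q.1 q.2 B))
    (κbar : ProbabilityTheory.Kernel (Fin d → ℝ) (Fin d → ℝ)) [IsMarkovKernel κbar]
    (ε δ : ℝ) (hε : 0 ≤ ε) (hδ : 0 ≤ δ)
    (hclose : ∀ u : Fin d → ℝ,
      ENNReal.ofReal (1 - δ) ≤ μ {s | tvDist (κ s u) (κbar u) ≤ ε}) :
    ∀ (u : Fin d → ℝ) (T : ℕ), 1 ≤ T →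
      tvDist (kIter (fun x => μ.bind (fun s => κ s x)) (T - 1) u)
          (kIter (fun x => κbar x) (T - 1) u)
        ≤ (T : ℝ) * (δ + ε) :=
  stmt2_general μ κ hκ hjoint κbar ε δ hε hclose
end

section
/- Let (S, Σ, μ) be a probability space, let {κ_s}_{s ∈ S} be a family of Markov kernels from ℝ^d to ℝ^d such that (s, u) ↦ κ_s(u)(B) is jointly measurable for every Borel set B, and let ε, δ ≥ 0. Assume {κ_s} is (ε, δ)-pseudo-independent of its seed, i.e. there exists a Markov kernel κ̄ from ℝ^d to ℝ^d such that for every u ∈ ℝ^d, μ{ s ∈ S : d_TV(κ_s(u), κ̄(u)) ≤ ε } ≥ 1 − δ. Define the averaged kernel κ by κ(u)(B) := ∫_S κ_s(u)(B) dμ(s). Then for every u ∈ ℝ^d and every integer T ≥ 1, d_TV( ∫_S κ_s^T(u) dμ(s), κ^T(u) ) ≤ 2T(δ + ε), where κ_s^T(u) is the T-fold iterate of κ_s at u and ∫_S κ_s^T(u) dμ(s) is the mixture measure B ↦ ∫_S κ_s^T(u)(B) dμ(s). -/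
/-!
Hybrid argument. Against a `[0,1]`-valued integrand, changing the law moves the integral by at
most `d_TV`. So replacing `κ_s(y)` by `κbar(y)` under an integrand that may depend on the seed
`s` costs `ε` on the seeds where the two are `ε`-close and at most `1` on the rest, which have
mass `≤ δ`. Comparing the fresh-seed step `κ(y)` with `κbar(y)` in the same way, one step with
the reused seed costs `2(ε + δ)` against a fresh one. By induction on `T`, the first `T - 1`
steps are refreshed by the induction hypothesis, applied to the seed-dependent integrand
`y ↦ ∫ F_s dκ_s(y)`, and then the last step.
-/

open MeasureTheory ProbabilityTheory
open scoped ENNReal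

section TotalVariation

variable {X : Type*} [MeasurableSpace X]

lemma tvDist_comm (ρ ρ' : Measure X) : tvDist ρ ρ' = tvDist ρ' ρ :=
  iSup_congr fun _ => abs_sub_comm _ _

variable (ρ ρ' : Measure X) [IsProbabilityMeasure ρ] [IsProbabilityMeasure ρ']

lemma bddAbove_range_abs_sub_measure :
    BddAbove (Set.range fun E : {E : Set X // MeasurableSet E} =>
      |(ρ E.1).toReal - (ρ' E.1).toReal|) := by
  refine ⟨1, ?_⟩
  rintro _ ⟨E, rfl⟩
  simp only [← measureReal_def, abs_sub_le_iff]
  constructor <;> linarith [measureReal_nonneg (μ := ρ) (s := E.1),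
    measureReal_nonneg (μ := ρ') (s := E.1), measureReal_le_one (μ := ρ) (s := E.1),
    measureReal_le_one (μ := ρ') (s := E.1)]

lemma abs_sub_le_tvDist {E : Set X} (hE : MeasurableSet E) :
    |(ρ E).toReal - (ρ' E).toReal| ≤ tvDist ρ ρ' :=
  le_ciSup (bddAbove_range_abs_sub_measure ρ ρ') ⟨E, hE⟩

/-- On the positive set `P` of a Hahn decomposition of `ρ - ρ'`, `ρ` exceeds `ρ'` by the
measure `η`, of mass `ρ P - ρ' P`; off `P`, `ρ ≤ ρ'`. -/
lemma exists_le_add_measure_univ_le_tvDist :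
    ∃ η : Measure X, ρ ≤ ρ' + η ∧ η Set.univ ≤ ENNReal.ofReal (tvDist ρ ρ') := by
  obtain ⟨P, hP, hPle, hPcle⟩ := hahn_decomposition ρ ρ'
  have hle : ρ'.restrict P ≤ ρ.restrict P := Measure.le_iff.2 fun t ht => by
    simpa only [Measure.restrict_apply ht] using hPle _ (ht.inter hP) Set.inter_subset_right
  have hle' : ρ.restrict Pᶜ ≤ ρ'.restrict Pᶜ := Measure.le_iff.2 fun t ht => by
    simpa only [Measure.restrict_apply ht] using
      hPcle _ (ht.inter hP.compl) Set.inter_subset_right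
  refine ⟨ρ.restrict P - ρ'.restrict P, ?_, ?_⟩
  · calc ρ = ρ.restrict P + ρ.restrict Pᶜ := (Measure.restrict_add_restrict_compl hP).symm
      _ ≤ (ρ'.restrict P + (ρ.restrict P - ρ'.restrict P)) + ρ'.restrict Pᶜ := by
        rw [add_comm (ρ'.restrict P), Measure.sub_add_cancel_of_le hle]
        gcongr
      _ = ρ' + (ρ.restrict P - ρ'.restrict P) := by
        rw [add_right_comm, Measure.restrict_add_restrict_compl hP]
  · rw [Measure.sub_apply MeasurableSet.univ hle, Measure.restrict_apply_univ,
      Measure.restrict_apply_univ, ← ENNReal.ofReal_toReal (measure_ne_top ρ P),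
      ← ENNReal.ofReal_toReal (measure_ne_top ρ' P),
      ← ENNReal.ofReal_sub _ ENNReal.toReal_nonneg]
    exact ENNReal.ofReal_le_ofReal ((le_abs_self _).trans (abs_sub_le_tvDist ρ ρ' hP))

lemma lintegral_le_lintegral_add_tvDist {f : X → ℝ≥0∞} (hf : ∀ x, f x ≤ 1) :
    ∫⁻ x, f x ∂ρ ≤ ∫⁻ x, f x ∂ρ' + ENNReal.ofReal (tvDist ρ ρ') := by
  obtain ⟨η, hρ, hη⟩ := exists_le_add_measure_univ_le_tvDist ρ ρ'
  calc ∫⁻ x, f x ∂ρ ≤ ∫⁻ x, f x ∂(ρ' + η) := lintegral_mono' hρ le_rfl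
    _ = ∫⁻ x, f x ∂ρ' + ∫⁻ x, f x ∂η := lintegral_add_measure _ _ _
    _ ≤ ∫⁻ x, f x ∂ρ' + ∫⁻ _, 1 ∂η := by gcongr; exact hf _
    _ ≤ ∫⁻ x, f x ∂ρ' + ENNReal.ofReal (tvDist ρ ρ') := by
        gcongr; simpa using hη

/-- A one-sided bound on all events is two-sided, by passing to complements. -/
lemma tvDist_le_of_forall_le_add {c : ℝ} (hc : 0 ≤ c)
    (h : ∀ E, MeasurableSet E → ρ E ≤ ρ' E + ENNReal.ofReal c) : tvDist ρ ρ' ≤ c := by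
  have hreal : ∀ E, MeasurableSet E → ρ.real E ≤ ρ'.real E + c := fun E hE => by
    simpa [measureReal_def, ENNReal.toReal_add, hc] using
      ENNReal.toReal_mono (by finiteness) (h E hE)
  refine ciSup_le fun ⟨E, hE⟩ => abs_sub_le_iff.2 ⟨?_, ?_⟩
  · linarith [hreal E hE, measureReal_def ρ E, measureReal_def ρ' E]
  · have := hreal Eᶜ hE.compl
    rw [probReal_compl_eq_one_sub hE, probReal_compl_eq_one_sub hE] at this
    linarith [measureReal_def ρ E, measureReal_def ρ' E]

end TotalVariation

theorem Measurable.lintegral_prod_right_of_isProbabilityMeasure {α β : Type*}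
    [MeasurableSpace α] [MeasurableSpace β] {ν : α → Measure β} (hν : Measurable ν)
    [∀ a, IsProbabilityMeasure (ν a)] {f : α → β → ℝ≥0∞}
    (hf : Measurable (Function.uncurry f)) : Measurable fun a => ∫⁻ b, f a b ∂(ν a) :=
  have : IsMarkovKernel (⟨ν, hν⟩ : Kernel α β) :=
    ⟨fun a => inferInstanceAs (IsProbabilityMeasure (ν a))⟩
  Measurable.lintegral_kernel_prod_right (κ := ⟨ν, hν⟩) hf

section Iterates

variable {X : Type*} [MeasurableSpace X] {k : X → Measure X}

lemma lintegral_kIter_succ (hk : Measurable k) (n : ℕ) (x : X) {f : X → ℝ≥0∞}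
    (hf : Measurable f) :
    ∫⁻ z, f z ∂(kIter k (n + 1) x) = ∫⁻ y, ∫⁻ z, f z ∂(k y) ∂(kIter k n x) :=
  Measure.lintegral_bind hk.aemeasurable hf.aemeasurable

lemma isProbabilityMeasure_kIter_s4 (hk : Measurable k) [∀ x, IsProbabilityMeasure (k x)]
    (n : ℕ) (x : X) : IsProbabilityMeasure (kIter k n x) := by
  induction n with
  | zero => exact inferInstanceAs (IsProbabilityMeasure (k x))
  | succ n ih => exact isProbabilityMeasure_bind hk.aemeasurable (.of_forall inferInstance)

lemma measurable_kIter_uncurry {S : Type*} [MeasurableSpace S] {κ : S → X → Measure X}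
    (hκ : Measurable fun q : S × X => κ q.1 q.2) [∀ s x, IsProbabilityMeasure (κ s x)]
    (n : ℕ) : Measurable fun q : S × X => kIter (κ q.1) n q.2 := by
  induction n with
  | zero => exact hκ
  | succ n ih =>
    have hκs (s : S) : Measurable (κ s) := hκ.comp measurable_prodMk_left
    have (q : S × X) := isProbabilityMeasure_kIter_s4 (hκs q.1) n q.2
    refine Measure.measurable_of_measurable_coe _ fun B hB => ?_
    simp_rw [kIter, Measure.bind_apply hB (hκs _).aemeasurable]
    exact ih.lintegral_prod_right_of_isProbabilityMeasure
      ((Measure.measurable_coe hB).comp (hκ.comp (measurable_fst.fst.prodMk measurable_snd)))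

end Iterates

section Seeds

variable {S X : Type*} [MeasurableSpace S] [MeasurableSpace X] {μ : Measure S}

lemma lintegral_le_lintegral_add_of_le_add_on [IsProbabilityMeasure μ] {x y : S → ℝ≥0∞}
    (hx : Measurable x) (hy : Measurable y) (hx1 : ∀ s, x s ≤ 1) {a : ℝ≥0∞} {A : Set S}
    (hxy : ∀ s ∈ A, x s ≤ y s + a) {δ : ℝ} (hA : ENNReal.ofReal (1 - δ) ≤ μ A) :
    ∫⁻ s, x s ∂μ ≤ ∫⁻ s, y s ∂μ + a + ENNReal.ofReal δ := by
  set B := {s | x s ≤ y s + a}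
  have hB : MeasurableSet B := measurableSet_le hx (hy.add_const a)
  have hμB : μ Bᶜ ≤ ENNReal.ofReal δ := by
    rw [prob_compl_eq_one_sub hB, tsub_le_iff_right]
    calc 1 = ENNReal.ofReal (δ + (1 - δ)) := by simp
      _ ≤ ENNReal.ofReal δ + ENNReal.ofReal (1 - δ) := ENNReal.ofReal_add_le
      _ ≤ ENNReal.ofReal δ + μ B := by gcongr; exact hA.trans (measure_mono hxy)
  have hpt (s : S) : x s ≤ y s + a + Bᶜ.indicator 1 s := by
    by_cases hs : s ∈ B
    · exact le_add_right hs
    · simpa [hs] using (hx1 s).trans le_add_self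
  calc ∫⁻ s, x s ∂μ ≤ ∫⁻ s, y s + a + Bᶜ.indicator 1 s ∂μ := lintegral_mono hpt
    _ = ∫⁻ s, y s ∂μ + a + μ Bᶜ := by
      rw [lintegral_add_right _ (measurable_one.indicator hB.compl),
        lintegral_add_right _ measurable_const, lintegral_indicator_one hB.compl]
      simp
    _ ≤ ∫⁻ s, y s ∂μ + a + ENNReal.ofReal δ := by gcongr

lemma lintegral_lintegral_le_add_of_tvDist_le [IsProbabilityMeasure μ] {P Q : S → Measure X}
    (hP : Measurable P) (hQ : Measurable Q) [∀ s, IsProbabilityMeasure (P s)]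
    [∀ s, IsProbabilityMeasure (Q s)]
    {F : S → X → ℝ≥0∞} (hF : Measurable (Function.uncurry F)) (hF1 : ∀ s z, F s z ≤ 1)
    {ε δ : ℝ} (hPQ : ENNReal.ofReal (1 - δ) ≤ μ {s | tvDist (P s) (Q s) ≤ ε}) :
    ∫⁻ s, ∫⁻ z, F s z ∂(P s) ∂μ
      ≤ ∫⁻ s, ∫⁻ z, F s z ∂(Q s) ∂μ + ENNReal.ofReal ε + ENNReal.ofReal δ := by
  refine lintegral_le_lintegral_add_of_le_add_on
    (hP.lintegral_prod_right_of_isProbabilityMeasure hF)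
    (hQ.lintegral_prod_right_of_isProbabilityMeasure hF)
    (fun s => lintegral_le_const (.of_forall (hF1 s))) (fun s hs => ?_) hPQ
  exact (lintegral_le_lintegral_add_tvDist _ _ (hF1 s)).trans (by gcongr; exact hs)

/-- The averaged kernel `u ↦ ∫ κ_s(u) dμ(s)`: one step with a fresh seed. -/
noncomputable def seedAverage (μ : Measure S) (κ : S → X → Measure X) (x : X) : Measure X :=
  μ.bind fun s => κ s x

variable {κ : S → X → Measure X}

lemma seedAverage_apply (hκ : Measurable fun q : S × X => κ q.1 q.2) (x : X) {B : Set X}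
    (hB : MeasurableSet B) : seedAverage μ κ x B = ∫⁻ s, κ s x B ∂μ :=
  Measure.bind_apply hB (hκ.comp measurable_prodMk_right).aemeasurable

lemma lintegral_seedAverage (hκ : Measurable fun q : S × X => κ q.1 q.2) (x : X)
    {f : X → ℝ≥0∞} (hf : Measurable f) :
    ∫⁻ z, f z ∂(seedAverage μ κ x) = ∫⁻ s, ∫⁻ z, f z ∂(κ s x) ∂μ :=
  Measure.lintegral_bind (hκ.comp measurable_prodMk_right).aemeasurable hf.aemeasurable

variable [IsProbabilityMeasure μ]

lemma measurable_seedAverage (hκ : Measurable fun q : S × X => κ q.1 q.2) :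
    Measurable (seedAverage μ κ) := by
  refine Measure.measurable_of_measurable_coe _ fun B hB => ?_
  simp_rw [seedAverage_apply hκ _ hB]
  exact ((Measure.measurable_coe hB).comp hκ).lintegral_prod_left'

variable [∀ s x, IsProbabilityMeasure (κ s x)]

lemma isProbabilityMeasure_seedAverage (hκ : Measurable fun q : S × X => κ q.1 q.2) (x : X) :
    IsProbabilityMeasure (seedAverage μ κ x) :=
  isProbabilityMeasure_bind (hκ.comp measurable_prodMk_right).aemeasurable
    (.of_forall inferInstance)

variable {κbar : X → Measure X} [∀ x, IsProbabilityMeasure (κbar x)] {ε δ : ℝ}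

lemma lintegral_lintegral_le_seedAverage (hκ : Measurable fun q : S × X => κ q.1 q.2)
    (hclose : ∀ x, ENNReal.ofReal (1 - δ) ≤ μ {s | tvDist (κ s x) (κbar x) ≤ ε}) (y : X)
    {F : S → X → ℝ≥0∞} (hF : Measurable (Function.uncurry F)) (hF1 : ∀ s z, F s z ≤ 1) :
    ∫⁻ s, ∫⁻ z, F s z ∂(κ s y) ∂μ
      ≤ ∫⁻ s, ∫⁻ z, F s z ∂(seedAverage μ κ y) ∂μ
        + 2 * (ENNReal.ofReal ε + ENNReal.ofReal δ) := by
  have hκy : Measurable fun s => κ s y := hκ.comp measurable_prodMk_right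
  have hbar (s : S) : ∫⁻ z, F s z ∂(κbar y)
      ≤ ∫⁻ z, F s z ∂(seedAverage μ κ y) + ENNReal.ofReal ε + ENNReal.ofReal δ := by
    have hFs : Measurable (F s) := hF.comp measurable_prodMk_left
    rw [lintegral_seedAverage hκ y hFs]
    simpa using lintegral_lintegral_le_add_of_tvDist_le (μ := μ) measurable_const hκy
      (F := fun _ => F s) (hFs.comp measurable_snd) (fun _ => hF1 s)
      (by simpa only [tvDist_comm] using hclose y)
  calc ∫⁻ s, ∫⁻ z, F s z ∂(κ s y) ∂μ
      ≤ ∫⁻ s, ∫⁻ z, F s z ∂(κbar y) ∂μ + ENNReal.ofReal ε + ENNReal.ofReal δ :=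
        lintegral_lintegral_le_add_of_tvDist_le hκy measurable_const hF hF1 (hclose y)
    _ ≤ ∫⁻ s, (∫⁻ z, F s z ∂(seedAverage μ κ y) + ENNReal.ofReal ε + ENNReal.ofReal δ) ∂μ
          + ENNReal.ofReal ε + ENNReal.ofReal δ := by
      gcongr with s; exact hbar s
    _ = ∫⁻ s, ∫⁻ z, F s z ∂(seedAverage μ κ y) ∂μ
          + 2 * (ENNReal.ofReal ε + ENNReal.ofReal δ) := by
      rw [lintegral_add_right _ measurable_const, lintegral_add_right _ measurable_const]
      simp only [lintegral_const, measure_univ, mul_one]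
      ring

lemma lintegral_lintegral_lintegral_le_seedAverage
    (hκ : Measurable fun q : S × X => κ q.1 q.2)
    (hclose : ∀ x, ENNReal.ofReal (1 - δ) ≤ μ {s | tvDist (κ s x) (κbar x) ≤ ε})
    (ν : Measure X) [IsProbabilityMeasure ν]
    {F : S → X → ℝ≥0∞} (hF : Measurable (Function.uncurry F)) (hF1 : ∀ s z, F s z ≤ 1) :
    ∫⁻ s, ∫⁻ y, ∫⁻ z, F s z ∂(κ s y) ∂ν ∂μ
      ≤ ∫⁻ s, ∫⁻ y, ∫⁻ z, F s z ∂(seedAverage μ κ y) ∂ν ∂μ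
        + 2 * (ENNReal.ofReal ε + ENNReal.ofReal δ) := by
  have := isProbabilityMeasure_seedAverage (μ := μ) hκ
  have hF' : Measurable fun p : (S × X) × X => F p.1.1 p.2 :=
    hF.comp (measurable_fst.fst.prodMk measurable_snd)
  have hG := hκ.lintegral_prod_right_of_isProbabilityMeasure (f := fun q z => F q.1 z) hF'
  have hH : Measurable fun q : S × X => ∫⁻ z, F q.1 z ∂(seedAverage μ κ q.2) :=
    Measurable.lintegral_prod_right_of_isProbabilityMeasure
      (ν := fun q : S × X => seedAverage μ κ q.2) ((measurable_seedAverage hκ).comp measurable_snd)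
      hF'
  calc ∫⁻ s, ∫⁻ y, ∫⁻ z, F s z ∂(κ s y) ∂ν ∂μ
      = ∫⁻ y, ∫⁻ s, ∫⁻ z, F s z ∂(κ s y) ∂μ ∂ν := lintegral_lintegral_swap hG.aemeasurable
    _ ≤ ∫⁻ y, (∫⁻ s, ∫⁻ z, F s z ∂(seedAverage μ κ y) ∂μ
          + 2 * (ENNReal.ofReal ε + ENNReal.ofReal δ)) ∂ν :=
      lintegral_mono fun y => lintegral_lintegral_le_seedAverage hκ hclose y hF hF1
    _ = ∫⁻ s, ∫⁻ y, ∫⁻ z, F s z ∂(seedAverage μ κ y) ∂ν ∂μ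
          + 2 * (ENNReal.ofReal ε + ENNReal.ofReal δ) := by
      rw [lintegral_add_right _ measurable_const, lintegral_const, measure_univ, mul_one]
      exact congrArg (· + _) (lintegral_lintegral_swap
        (f := fun s y => ∫⁻ z, F s z ∂(seedAverage μ κ y)) hH.aemeasurable).symm

lemma lintegral_lintegral_kIter_le_seedAverage
    (hκ : Measurable fun q : S × X => κ q.1 q.2)
    (hclose : ∀ x, ENNReal.ofReal (1 - δ) ≤ μ {s | tvDist (κ s x) (κbar x) ≤ ε})
    (n : ℕ) (x : X) {F : S → X → ℝ≥0∞} (hF : Measurable (Function.uncurry F))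
    (hF1 : ∀ s z, F s z ≤ 1) :
    ∫⁻ s, ∫⁻ z, F s z ∂(kIter (κ s) n x) ∂μ
      ≤ ∫⁻ s, ∫⁻ z, F s z ∂(kIter (seedAverage μ κ) n x) ∂μ
        + 2 * (n + 1) * (ENNReal.ofReal ε + ENNReal.ofReal δ) := by
  induction n generalizing F with
  | zero => simpa [kIter] using lintegral_lintegral_le_seedAverage hκ hclose x hF hF1
  | succ n ih =>
    have := isProbabilityMeasure_seedAverage (μ := μ) hκ
    have := isProbabilityMeasure_kIter_s4 (measurable_seedAverage (μ := μ) hκ) n x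
    have hFs (s : S) : Measurable (F s) := hF.comp measurable_prodMk_left
    have hG : Measurable fun q : S × X => ∫⁻ z, F q.1 z ∂(κ q.1 q.2) :=
      hκ.lintegral_prod_right_of_isProbabilityMeasure
        (hF.comp (measurable_fst.fst.prodMk measurable_snd))
    calc ∫⁻ s, ∫⁻ z, F s z ∂(kIter (κ s) (n + 1) x) ∂μ
        = ∫⁻ s, ∫⁻ y, ∫⁻ z, F s z ∂(κ s y) ∂(kIter (κ s) n x) ∂μ :=
          lintegral_congr fun s =>
            lintegral_kIter_succ (hκ.comp measurable_prodMk_left) n x (hFs s)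
      _ ≤ ∫⁻ s, ∫⁻ y, ∫⁻ z, F s z ∂(κ s y) ∂(kIter (seedAverage μ κ) n x) ∂μ
            + 2 * (n + 1) * (ENNReal.ofReal ε + ENNReal.ofReal δ) :=
          ih hG fun s y => lintegral_le_const (.of_forall (hF1 s))
      _ ≤ ∫⁻ s, ∫⁻ y, ∫⁻ z, F s z ∂(seedAverage μ κ y)
              ∂(kIter (seedAverage μ κ) n x) ∂μ
            + 2 * (ENNReal.ofReal ε + ENNReal.ofReal δ)
            + 2 * (n + 1) * (ENNReal.ofReal ε + ENNReal.ofReal δ) := by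
          gcongr
          exact lintegral_lintegral_lintegral_le_seedAverage hκ hclose _ hF hF1
      _ = ∫⁻ s, ∫⁻ z, F s z ∂(kIter (seedAverage μ κ) (n + 1) x) ∂μ
            + 2 * ((n + 1 : ℕ) + 1) * (ENNReal.ofReal ε + ENNReal.ofReal δ) := by
          simp_rw [lintegral_kIter_succ (measurable_seedAverage hκ) n x (hFs _)]
          push_cast
          ring

lemma tvDist_bind_kIter_le (hκ : Measurable fun q : S × X => κ q.1 q.2)
    (hε : 0 ≤ ε) (hδ : 0 ≤ δ)
    (hclose : ∀ x, ENNReal.ofReal (1 - δ) ≤ μ {s | tvDist (κ s x) (κbar x) ≤ ε})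
    (n : ℕ) (x : X) :
    tvDist (μ.bind fun s => kIter (κ s) n x) (kIter (seedAverage μ κ) n x)
      ≤ 2 * (n + 1) * (ε + δ) := by
  have hmix : Measurable fun s => kIter (κ s) n x :=
    (measurable_kIter_uncurry hκ n).comp measurable_prodMk_right
  have := isProbabilityMeasure_seedAverage (μ := μ) hκ
  have := isProbabilityMeasure_kIter_s4 (measurable_seedAverage (μ := μ) hκ) n x
  have hiter (s : S) : IsProbabilityMeasure (kIter (κ s) n x) :=
    isProbabilityMeasure_kIter_s4 (k := κ s) (hκ.comp measurable_prodMk_left) n x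
  have := isProbabilityMeasure_bind (m := μ) hmix.aemeasurable (.of_forall hiter)
  refine tvDist_le_of_forall_le_add _ _ (by positivity) fun E hE => ?_
  have hE1 : Measurable (Function.uncurry fun (_ : S) => E.indicator (1 : X → ℝ≥0∞)) :=
    measurable_one.indicator (measurable_snd hE)
  have := lintegral_lintegral_kIter_le_seedAverage hκ hclose n x hE1 fun _ =>
    Set.indicator_le fun _ _ => le_rfl
  simp only [lintegral_indicator_one hE, lintegral_const, measure_univ, mul_one] at this
  rw [Measure.bind_apply hE hmix.aemeasurable, ENNReal.ofReal_mul (by positivity),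
    ENNReal.ofReal_add hε hδ]
  convert this
  norm_cast

end Seeds

/-- Main composition theorem for pseudo-independent algorithms: if the family
`{κ_s}` is `(ε, δ)`-pseudo-independent of its seed `s ∼ μ` (i.e. some Markov kernel
`κ̄` satisfies `μ{s : d_TV(κ_s(u), κ̄(u)) ≤ ε} ≥ 1 - δ` for every `u`), then for
every `u` and `T ≥ 1`, the mixture over `s ∼ μ` of the `T`-step iterates `κ_s^T(u)`
(seed reused in every step) is within `2T(δ + ε)` in total variation of the `T`-step
iterate of the averaged kernel `κ(u) = ∫ κ_s(u) dμ(s)` (fresh seed in every step). -/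
theorem stmt4 {d : ℕ} {S : Type*} [MeasurableSpace S]
    (μ : Measure S) [IsProbabilityMeasure μ]
    (κ : S → ProbabilityTheory.Kernel (Fin d → ℝ) (Fin d → ℝ))
    (hκ : ∀ s, IsMarkovKernel (κ s))
    (hjoint : ∀ B : Set (Fin d → ℝ), MeasurableSet B →
      Measurable (fun q : S × (Fin d → ℝ) => κ q.1 q.2 B))
    (ε δ : ℝ) (hε : 0 ≤ ε) (hδ : 0 ≤ δ)
    (hpi : ∃ κbar : ProbabilityTheory.Kernel (Fin d → ℝ) (Fin d → ℝ),
      IsMarkovKernel κbar ∧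
      ∀ u : Fin d → ℝ,
        ENNReal.ofReal (1 - δ) ≤ μ {s | tvDist (κ s u) (κbar u) ≤ ε}) :
    ∀ (u : Fin d → ℝ) (T : ℕ), 1 ≤ T →
      tvDist (μ.bind (fun s => kIter (fun x => κ s x) (T - 1) u))
          (kIter (fun x => μ.bind (fun s => κ s x)) (T - 1) u)
        ≤ 2 * (T : ℝ) * (δ + ε) := by
  obtain ⟨κbar, hκbar, hclose⟩ := hpi
  intro u T hT
  obtain ⟨n, rfl⟩ := Nat.exists_eq_add_of_le' hT
  have hκm : Measurable fun q : S × (Fin d → ℝ) => κ q.1 q.2 :=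
    Measure.measurable_of_measurable_coe _ hjoint
  rw [Nat.add_sub_cancel, Nat.cast_add_one, add_comm δ]
  exact tvDist_bind_kIter_le (κ := fun s x => κ s x) (κbar := κbar) hκm hε hδ hclose n u
end

section
/- Let p ≥ 1 be an integer, let t > 0, and let a, b ∈ ℝ^p. Let U be a random vector distributed uniformly on the cube [−t, t]^p (the product of uniform distributions on [−t, t]). Then d_TV( law(a + U), law(b + U) ) = 1 − ∏_{i=1}^p ( 1 − min(|a_i − b_i|, 2t)/(2t) ), and consequently d_TV( law(a + U), law(b + U) ) ≤ ∑_{i=1}^p min(|a_i − b_i|, 2t)/(2t) ≤ p·‖a − b‖_∞/(2t). -/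
/-!
Both laws are normalised Lebesgue measure on the cubes `A`, `B` of side `2t` centred at `a` and
`b`. For restrictions of one measure to two sets of equal finite mass, the supremum defining the
total variation is attained at `A \ B`, so the distance is `vol (A \ B) / vol A =
1 - vol (A ∩ B) / vol A`. The overlap `A ∩ B` is a box whose `i`-th side is
`2t - min (|aᵢ - bᵢ|, 2t)`, which gives the product formula; the bounds then follow from
`1 - ∏ (1 - xᵢ) ≤ ∑ xᵢ` for `xᵢ ∈ [0, 1]`.
-/

open MeasureTheory

/-- The uniform probability measure on the cube `[-t, t]^p ⊆ ℝ^p`: normalized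
restriction of Lebesgue measure to the cube (equivalently, the product of
uniform distributions on `[-t, t]`). -/
noncomputable def uniformCube (p : ℕ) (t : ℝ) : Measure (Fin p → ℝ) :=
  (ENNReal.ofReal ((2 * t) ^ p))⁻¹ •
    (volume.restrict (Set.Icc (fun _ => -t) (fun _ => t)))

open Set

section TotalVariation

variable {X : Type*} [MeasurableSpace X]

theorem tvDist_smul (c : ENNReal) (μ ν : Measure X) :
    tvDist (c • μ) (c • ν) = c.toReal * tvDist μ ν := by
  rw [tvDist, tvDist, Real.mul_iSup_of_nonneg ENNReal.toReal_nonneg]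
  congr 1 with E
  simp only [Measure.smul_apply, smul_eq_mul, ENNReal.toReal_mul, ← mul_sub, abs_mul,
    ENNReal.abs_toReal]

theorem measureReal_restrict_sub_measureReal_restrict_le {μ : Measure X} {A B E : Set X}
    (hA : μ A ≠ ⊤) (hB : μ B ≠ ⊤) (hE : MeasurableSet E) :
    (μ.restrict A).real E - (μ.restrict B).real E ≤ μ.real (A \ B) := by
  rw [measureReal_restrict_apply hE, measureReal_restrict_apply hE]
  calc μ.real (E ∩ A) - μ.real (E ∩ B)
      ≤ μ.real ((E ∩ A) \ (E ∩ B)) :=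
        le_measureReal_sdiff (measure_ne_top_of_subset inter_subset_right hB)
    _ ≤ μ.real (A \ B) :=
      measureReal_mono (fun x hx => ⟨hx.1.2, fun hB => hx.2 ⟨hx.1.1, hB⟩⟩)
        (measure_ne_top_of_subset sdiff_subset hA)

theorem tvDist_restrict_eq_measureReal_sdiff {μ : Measure X} {A B : Set X}
    (hA : MeasurableSet A) (hB : MeasurableSet B) (hAB : μ A = μ B) (hfin : μ A ≠ ⊤) :
    tvDist (μ.restrict A) (μ.restrict B) = μ.real (A \ B) := by
  have hfin' : μ B ≠ ⊤ := hAB ▸ hfin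
  have hsdiff_symm : μ.real (B \ A) = μ.real (A \ B) := by
    have hsplitA := measureReal_inter_add_sdiff (μ := μ) hB hfin
    have hsplitB := measureReal_inter_add_sdiff (μ := μ) hA hfin'
    have hreal : μ.real A = μ.real B := congrArg ENNReal.toReal hAB
    rw [inter_comm] at hsplitB
    linarith
  have hle : ∀ E : {E : Set X // MeasurableSet E},
      |(μ.restrict A E.1).toReal - (μ.restrict B E.1).toReal| ≤ μ.real (A \ B) := fun E =>
    abs_sub_le_iff.2
      ⟨measureReal_restrict_sub_measureReal_restrict_le hfin hfin' E.2,
        hsdiff_symm ▸ measureReal_restrict_sub_measureReal_restrict_le hfin' hfin E.2⟩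
  refine le_antisymm (ciSup_le hle) (le_ciSup_of_le ⟨_, forall_mem_range.2 hle⟩
    ⟨A \ B, hA.diff hB⟩ (le_of_eq ?_))
  rw [← measureReal_def, ← measureReal_def, measureReal_restrict_apply (hA.diff hB),
    measureReal_restrict_apply (hA.diff hB), inter_eq_left.2 sdiff_subset, sdiff_inter_self,
    measureReal_empty, sub_zero, abs_of_nonneg measureReal_nonneg]

end TotalVariation

theorem one_sub_prod_one_sub_le_sum {ι : Type*} (s : Finset ι) {x : ι → ℝ}
    (h0 : ∀ i ∈ s, 0 ≤ x i) (h1 : ∀ i ∈ s, x i ≤ 1) :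
    1 - ∏ i ∈ s, (1 - x i) ≤ ∑ i ∈ s, x i := by
  classical
  induction s using Finset.induction_on with
  | empty => simp
  | @insert j s hj ih =>
    rw [Finset.prod_insert hj, Finset.sum_insert hj]
    simp only [Finset.mem_insert, forall_eq_or_imp] at h0 h1
    have hprod_nonneg : 0 ≤ ∏ i ∈ s, (1 - x i) :=
      Finset.prod_nonneg fun i hi => sub_nonneg.2 (h1.2 i hi)
    have hprod_le_one : ∏ i ∈ s, (1 - x i) ≤ 1 :=
      Finset.prod_le_one (fun i hi => sub_nonneg.2 (h1.2 i hi))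
        fun i hi => sub_le_self _ (h0.2 i hi)
    nlinarith [ih h0.2 h1.2]

section Boxes

variable {ι : Type*} [Fintype ι]

theorem map_add_left_volume_restrict_Icc (c lo hi : ι → ℝ) :
    (volume.restrict (Icc lo hi)).map (c + ·) = volume.restrict (Icc (c + lo) (c + hi)) := by
  have hpre : (c + ·) ⁻¹' Icc (c + lo) (c + hi) = Icc lo hi := by
    rw [preimage_const_add_Icc, add_sub_cancel_left, add_sub_cancel_left]
  rw [← hpre, ← Measure.restrict_map (measurable_const_add c) measurableSet_Icc,
    map_add_left_eq_self]

theorem volume_Icc_add_const (c : ι → ℝ) {t : ℝ} (ht : 0 ≤ t) :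
    volume (Icc (c + fun _ => -t) (c + fun _ => t))
      = ENNReal.ofReal ((2 * t) ^ Fintype.card ι) := by
  rw [Real.volume_Icc_pi, ENNReal.ofReal_pow (by linarith), ← Finset.card_univ,
    ← Finset.prod_const]
  congr 1 with i
  simp only [Pi.add_apply]
  ring_nf

theorem volumeReal_Icc_add_const_inter (a b : ι → ℝ) (t : ℝ) :
    volume.real
        (Icc (a + fun _ => -t) (a + fun _ => t) ∩ Icc (b + fun _ => -t) (b + fun _ => t))
      = ∏ i, (2 * t - min |a i - b i| (2 * t)) := by
  rw [Icc_inter_Icc, measureReal_def, Real.volume_Icc_pi, ENNReal.toReal_prod]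
  refine Finset.prod_congr rfl fun i _ => ?_
  have hlen : ((a + fun _ => t) ⊓ (b + fun _ => t) : ι → ℝ) i
      - ((a + fun _ => -t) ⊔ (b + fun _ => -t) : ι → ℝ) i = 2 * t - |a i - b i| := by
    simp only [Pi.inf_apply, Pi.sup_apply, Pi.add_apply, ← sub_eq_add_neg, min_add_add_right,
      max_sub_sub_right]
    linarith [max_sub_min_eq_abs' (a i) (b i)]
  rw [hlen, ENNReal.toReal_ofReal']
  rcases le_total |a i - b i| (2 * t) with h | h
  · rw [min_eq_left h, max_eq_left (by linarith)]
  · rw [min_eq_right h, max_eq_right (by linarith), sub_self]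

end Boxes

theorem tvDist_map_add_uniformCube {p : ℕ} {t : ℝ} (ht : 0 < t) (a b : Fin p → ℝ) :
    tvDist ((uniformCube p t).map (fun x => a + x)) ((uniformCube p t).map (fun x => b + x))
      = 1 - ∏ i, (1 - min |a i - b i| (2 * t) / (2 * t)) := by
  have h2t : 0 < 2 * t := by linarith
  rw [uniformCube, Measure.map_smul, Measure.map_smul, map_add_left_volume_restrict_Icc,
    map_add_left_volume_restrict_Icc, tvDist_smul]
  set A := Icc (a + fun _ => -t) (a + fun _ => t)
  set B := Icc (b + fun _ => -t) (b + fun _ => t)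
  have hA : volume A = ENNReal.ofReal ((2 * t) ^ p) := by simpa using volume_Icc_add_const a ht.le
  have hB : volume B = ENNReal.ofReal ((2 * t) ^ p) := by simpa using volume_Icc_add_const b ht.le
  have hA_fin : volume A ≠ ⊤ := hA ▸ ENNReal.ofReal_ne_top
  rw [tvDist_restrict_eq_measureReal_sdiff measurableSet_Icc measurableSet_Icc (hA.trans hB.symm)
      hA_fin, eq_sub_of_add_eq (measureReal_sdiff_add_inter measurableSet_Icc hA_fin),
    measureReal_def, hA, volumeReal_Icc_add_const_inter, ENNReal.toReal_inv,
    ENNReal.toReal_ofReal (by positivity)]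
  simp_rw [one_sub_div h2t.ne']
  rw [Finset.prod_div_distrib, Finset.prod_const, Finset.card_univ, Fintype.card_fin]
  field_simp

theorem stmt5_general {p : ℕ} (t : ℝ) (ht : 0 < t) (a b : Fin p → ℝ) :
    tvDist ((uniformCube p t).map (fun x => a + x))
        ((uniformCube p t).map (fun x => b + x))
      = 1 - ∏ i : Fin p, (1 - min |a i - b i| (2 * t) / (2 * t)) ∧
    tvDist ((uniformCube p t).map (fun x => a + x))
        ((uniformCube p t).map (fun x => b + x))
      ≤ ∑ i : Fin p, min |a i - b i| (2 * t) / (2 * t) ∧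
    tvDist ((uniformCube p t).map (fun x => a + x))
        ((uniformCube p t).map (fun x => b + x))
      ≤ (p : ℝ) * ‖a - b‖ / (2 * t) := by
  have h2t : 0 < 2 * t := by linarith
  have hsum : 1 - ∏ i, (1 - min |a i - b i| (2 * t) / (2 * t))
      ≤ ∑ i, min |a i - b i| (2 * t) / (2 * t) :=
    one_sub_prod_one_sub_le_sum _ (fun i _ => by positivity)
      fun i _ => (div_le_one h2t).2 (min_le_right _ _)
  have hcoord (i : Fin p) : min |a i - b i| (2 * t) / (2 * t) ≤ ‖a - b‖ / (2 * t) := by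
    gcongr
    exact (min_le_left _ _).trans (by simpa using norm_le_pi_norm (a - b) i)
  rw [tvDist_map_add_uniformCube ht]
  refine ⟨rfl, hsum, hsum.trans ?_⟩
  calc ∑ i, min |a i - b i| (2 * t) / (2 * t) ≤ ∑ _i : Fin p, ‖a - b‖ / (2 * t) :=
        Finset.sum_le_sum fun i _ => hcoord i
    _ = p * ‖a - b‖ / (2 * t) := by simp [mul_div_assoc]

/-- Overlap estimate for uniform noise on a hypercube: for `U` uniform on `[-t,t]^p`,
`d_TV(law(a + U), law(b + U)) = 1 - ∏ᵢ (1 - min(|aᵢ - bᵢ|, 2t) / (2t))`, and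
consequently the distance is at most `∑ᵢ min(|aᵢ - bᵢ|, 2t)/(2t) ≤ p‖a - b‖_∞/(2t)`.
(The sup norm `‖·‖_∞` on `Fin p → ℝ` is the norm of the pi type.) -/
theorem stmt5 {p : ℕ} (hp : 1 ≤ p) (t : ℝ) (ht : 0 < t) (a b : Fin p → ℝ) :
    tvDist ((uniformCube p t).map (fun x => a + x))
        ((uniformCube p t).map (fun x => b + x))
      = 1 - ∏ i : Fin p, (1 - min |a i - b i| (2 * t) / (2 * t)) ∧
    tvDist ((uniformCube p t).map (fun x => a + x))
        ((uniformCube p t).map (fun x => b + x))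
      ≤ ∑ i : Fin p, min |a i - b i| (2 * t) / (2 * t) ∧
    tvDist ((uniformCube p t).map (fun x => a + x))
        ((uniformCube p t).map (fun x => b + x))
      ≤ (p : ℝ) * ‖a - b‖ / (2 * t) :=
  stmt5_general t ht a b
end

section
/- Let d, p ≥ 1, let (S, Σ, μ) be a probability space, for each u ∈ ℝ^d let ν_u be a probability measure on a measurable space C (depending measurably on u), let A : S × C × ℝ^d → ℝ^p be measurable, let f : ℝ^d → ℝ^p, and let η', τ > 0, δ ∈ (0, 1], ε₀ ∈ (0, 1]. Assume that for every u ∈ ℝ^d, (μ ⊗ ν_u){ (s, c) : ‖A(s, c, u) − f(u)‖_∞ ≤ η' } ≥ 1 − δ·ε₀. Let λ_τ be the uniform probability measure on the cube [−τ, τ]^p. Then for every u ∈ ℝ^d, μ{ s ∈ S : d_TV( law of (c, e) ↦ A(s, c, u) + e under ν_u ⊗ λ_τ, law of e ↦ f(u) + e under λ_τ ) ≤ ε₀ + p·η'/(2τ) } ≥ 1 − δ. In other words, the uniformly-noise-perturbed algorithm A'(s, (c, e), u) := A(s, c, u) + e admits the smoothing u ↦ law(f(u) + e) and is (ε₀ +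 p·η'/(2τ), δ)-pseudo-independent of its first seed s. -/
/-!
Conditionally on the oblivious seed `s`, the noisy output is a mixture over `c ∼ ν_u` of uniform
cubes centred at `A(s, c, u)`, while the smoothing is the cube centred at `f(u)`. Two cubes of
side `2τ` whose centres differ by `t_i` in coordinate `i` overlap in all but a
`1 - ∏ (1 - t_i / 2τ) ≤ ∑ t_i / 2τ ≤ p‖t‖_∞ / 2τ` fraction of their volume, so the total
variation of the mixture is at most `pη'/(2τ)` plus the `ν_u`-mass of the bad `c`. By Fubini the
bad mass has `μ`-mean at most `δε₀`, and Markov's inequality bounds by `δ` the measure of the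
seeds where it exceeds `ε₀`.
-/

open MeasureTheory

open Set ENNReal

section TotalVariation

variable {X : Type*} [MeasurableSpace X]

lemma tvDist_le_of_forall {μ ν : Measure X} {r : ℝ}
    (h : ∀ E, MeasurableSet E → |μ.real E - ν.real E| ≤ r) : tvDist μ ν ≤ r := by
  have : Nonempty {E : Set X // MeasurableSet E} := ⟨⟨∅, .empty⟩⟩
  exact ciSup_le fun E => h E.1 E.2

lemma abs_measureReal_sub_le_tvDist (μ ν : Measure X) [IsFiniteMeasure μ] [IsFiniteMeasure ν]
    {E : Set X} (hE : MeasurableSet E) : |μ.real E - ν.real E| ≤ tvDist μ ν := by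
  refine le_ciSup (f := fun E : {E : Set X // MeasurableSet E} =>
    |(μ E.1).toReal - (ν E.1).toReal|) ⟨μ.real univ + ν.real univ, ?_⟩ ⟨E, hE⟩
  rintro _ ⟨F, rfl⟩
  refine (abs_sub _ _).trans (add_le_add ?_ ?_) <;>
    simp only [abs_of_nonneg toReal_nonneg] <;> exact measureReal_mono (subset_univ _)

end TotalVariation

lemma measureReal_map_prod_eq_integral {C X Y : Type*} [MeasurableSpace C] [MeasurableSpace X]
    [MeasurableSpace Y] (ν : Measure C) (ρ : Measure X) [IsFiniteMeasure ρ]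
    {φ : C × X → Y} (hφ : Measurable φ) {E : Set Y} (hE : MeasurableSet E) :
    ((ν.prod ρ).map φ).real E = ∫ c, ρ.real ((fun e => φ (c, e)) ⁻¹' E) ∂ν := by
  rw [map_measureReal_apply hφ hE, measureReal_def, Measure.prod_apply (hφ hE),
    ← integral_toReal (measurable_measure_prodMk_left (hφ hE)).aemeasurable
      (.of_forall fun _ => measure_lt_top _ _)]
  rfl

lemma tvDist_map_prod_le {C X Y : Type*} [MeasurableSpace C] [MeasurableSpace X]
    [MeasurableSpace Y] (ν : Measure C) [IsProbabilityMeasure ν]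
    (ρ : Measure X) [IsProbabilityMeasure ρ] {φ : C × X → Y} (hφ : Measurable φ)
    {ψ : X → Y} (hψ : Measurable ψ) {B : Set C} (hB : MeasurableSet B) {κ : ℝ} (hκ : 0 ≤ κ)
    (hgood : ∀ c ∉ B, tvDist (ρ.map fun e => φ (c, e)) (ρ.map ψ) ≤ κ) :
    tvDist ((ν.prod ρ).map φ) (ρ.map ψ) ≤ κ + ν.real B := by
  refine tvDist_le_of_forall fun E hE => ?_
  set F : C → ℝ := fun c => ρ.real ((fun e => φ (c, e)) ⁻¹' E)
  set G : C → ℝ := fun c => κ + B.indicator 1 c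
  have hF : Integrable F ν := .of_bound
    (measurable_measure_prodMk_left (hφ hE)).ennreal_toReal.aestronglyMeasurable 1
    (.of_forall fun c => by rw [Real.norm_of_nonneg measureReal_nonneg]; exact measureReal_le_one)
  have hB1 : Integrable (B.indicator (1 : C → ℝ)) ν := (integrable_const 1).indicator hB
  have hG : Integrable G ν := (integrable_const κ).add hB1
  have hFG : ∀ c, ‖F c - ρ.real (ψ ⁻¹' E)‖ ≤ G c := by
    intro c
    rw [Real.norm_eq_abs]
    by_cases hc : c ∈ B
    · rw [show G c = κ + 1 by simp [G, hc]]
      exact (abs_sub_le_of_nonneg_of_le measureReal_nonneg measureReal_le_one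
        measureReal_nonneg measureReal_le_one).trans (le_add_of_nonneg_left hκ)
    · rw [show G c = κ by simp [G, hc]]
      have hφc : Measurable fun e => φ (c, e) := hφ.comp measurable_prodMk_left
      have hcE := abs_measureReal_sub_le_tvDist (ρ.map fun e => φ (c, e)) (ρ.map ψ) hE
      rw [map_measureReal_apply hφc hE,
        map_measureReal_apply hψ hE] at hcE
      exact hcE.trans (hgood c hc)
  calc |((ν.prod ρ).map φ).real E - (ρ.map ψ).real E|
      = ‖∫ c, (F c - ρ.real (ψ ⁻¹' E)) ∂ν‖ := by
        rw [measureReal_map_prod_eq_integral ν ρ hφ hE, map_measureReal_apply hψ hE,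
          integral_sub hF (integrable_const _), integral_const, probReal_univ, one_smul,
          Real.norm_eq_abs]
    _ ≤ ∫ c, G c ∂ν := norm_integral_le_of_norm_le hG (.of_forall hFG)
    _ = κ + ν.real B := by
        rw [integral_add (integrable_const κ) hB1,
          integral_const, probReal_univ, one_smul, integral_indicator_one hB]

lemma Finset.one_sub_sum_le_prod_one_sub {ι : Type*} (s : Finset ι) {t : ι → ℝ}
    (h0 : ∀ i ∈ s, 0 ≤ t i) (h1 : ∀ i ∈ s, t i ≤ 1) :
    1 - ∑ i ∈ s, t i ≤ ∏ i ∈ s, (1 - t i) := by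
  induction s using Finset.cons_induction with
  | empty => simp
  | cons a s _ ih =>
    rw [Finset.prod_cons, Finset.sum_cons]
    have ih := ih (fun i hi => h0 i (Finset.mem_cons_of_mem hi))
      (fun i hi => h1 i (Finset.mem_cons_of_mem hi))
    have hta0 := h0 a (Finset.mem_cons_self a s)
    have hta1 := h1 a (Finset.mem_cons_self a s)
    have hs : 0 ≤ ∑ i ∈ s, t i :=
      Finset.sum_nonneg fun i hi => h0 i (Finset.mem_cons_of_mem hi)
    nlinarith [mul_le_mul_of_nonneg_left ih (sub_nonneg.mpr hta1)]

section Box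

variable {ι : Type*} [Fintype ι]

lemma pow_card_le_prod_max_sub_add {c : ℝ} (hc : 0 < c) {d : ι → ℝ} (hd : ∀ i, 0 ≤ d i) :
    c ^ Fintype.card ι ≤ ∏ i, max (c - d i) 0 + c ^ Fintype.card ι * ∑ i, d i / c := by
  set t : ι → ℝ := fun i => min (d i / c) 1
  have hmax : ∀ i, max (c - d i) 0 = c * (1 - t i) := by
    intro i
    simp only [t]
    rcases le_total (d i) c with h | h
    · rw [max_eq_left (by linarith), min_eq_left ((div_le_one hc).mpr h)]
      field_simp
    · rw [max_eq_right (by linarith), min_eq_right ((one_le_div hc).mpr h)]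
      ring
  have hprod : c ^ Fintype.card ι * (1 - ∑ i, t i) ≤ ∏ i, max (c - d i) 0 := by
    rw [Finset.prod_congr rfl fun i _ => hmax i, Finset.prod_mul_distrib, Finset.prod_const,
      Finset.card_univ]
    refine mul_le_mul_of_nonneg_left (Finset.one_sub_sum_le_prod_one_sub _ ?_ ?_) (by positivity)
    exacts [fun i _ => le_min (div_nonneg (hd i) hc.le) zero_le_one, fun i _ => min_le_right _ _]
  have hsum : ∑ i, t i ≤ ∑ i, d i / c := Finset.sum_le_sum fun i _ => min_le_left _ _
  nlinarith [pow_pos hc (Fintype.card ι)]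

lemma volume_Icc_pi_sub_add (x : ι → ℝ) {τ : ℝ} (hτ : 0 ≤ τ) :
    volume (Icc (fun i => x i - τ) (fun i => x i + τ)) =
      ENNReal.ofReal ((2 * τ) ^ Fintype.card ι) := by
  simp_rw [Real.volume_Icc_pi, show ∀ i, x i + τ - (x i - τ) = 2 * τ from fun i => by ring]
  rw [Finset.prod_const, Finset.card_univ, ofReal_pow (by linarith)]

lemma volume_Icc_pi_sub_add_inter (x y : ι → ℝ) (τ : ℝ) :
    volume (Icc (fun i => x i - τ) (fun i => x i + τ) ∩ Icc (fun i => y i - τ) (fun i => y i + τ))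
      = ENNReal.ofReal (∏ i, max (2 * τ - |x i - y i|) 0) := by
  rw [Icc_inter_Icc, Real.volume_Icc_pi, ofReal_prod_of_nonneg fun i _ => le_max_right _ _]
  refine Finset.prod_congr rfl fun i _ => ?_
  rw [ofReal_max, ofReal_zero, max_eq_left (by positivity), Pi.inf_apply, Pi.sup_apply,
    min_add_add_right, max_sub_sub_right, abs_sub_comm, ← max_sub_min_eq_abs]
  ring_nf

lemma volume_Icc_pi_sub_add_sdiff_le (x y : ι → ℝ) {τ : ℝ} (hτ : 0 < τ) :
    volume (Icc (fun i => x i - τ) (fun i => x i + τ) \ Icc (fun i => y i - τ) (fun i => y i + τ))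
      ≤ ENNReal.ofReal ((2 * τ) ^ Fintype.card ι * ∑ i, |x i - y i| / (2 * τ)) := by
  have hinter := volume_Icc_pi_sub_add_inter x y τ
  rw [← sdiff_inter_self_eq_sdiff, inter_comm,
    measure_sdiff_le_iff_le_add (measurableSet_Icc.inter measurableSet_Icc).nullMeasurableSet
      inter_subset_left (by rw [hinter]; exact ofReal_ne_top),
    hinter, volume_Icc_pi_sub_add x hτ.le,
    ← ofReal_add (Finset.prod_nonneg fun i _ => le_max_right _ _) (by positivity)]
  have := pow_card_le_prod_max_sub_add (by positivity : 0 < 2 * τ) fun i => abs_nonneg (x i - y i)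
  exact ofReal_le_ofReal (by simpa only [sub_eq_add_neg] using this)

end Box

section UniformCube

variable {p : ℕ} {τ : ℝ}

lemma uniformCube_preimage_const_add (x : Fin p → ℝ) {E : Set (Fin p → ℝ)}
    (hE : MeasurableSet E) :
    uniformCube p τ ((x + ·) ⁻¹' E) = (ENNReal.ofReal ((2 * τ) ^ p))⁻¹ *
      volume (E ∩ Icc (fun i => x i - τ) (fun i => x i + τ)) := by
  have hcube : Icc (fun _ => -τ) (fun _ => τ) =
      (x + ·) ⁻¹' Icc (fun i => x i - τ) (fun i => x i + τ) := by
    rw [preimage_const_add_Icc]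
    congr 1 <;> funext i <;> simp only [Pi.sub_apply] <;> ring
  rw [uniformCube, Measure.smul_apply, Measure.restrict_apply (measurable_const_add x hE), hcube,
    ← preimage_inter, measure_preimage_add, smul_eq_mul]

lemma isProbabilityMeasure_uniformCube (hτ : 0 < τ) : IsProbabilityMeasure (uniformCube p τ) := by
  constructor
  rw [← preimage_univ (f := ((0 : Fin p → ℝ) + ·)), uniformCube_preimage_const_add 0 .univ,
    univ_inter, volume_Icc_pi_sub_add 0 hτ.le, Fintype.card_fin,
    ENNReal.inv_mul_cancel (by positivity) ofReal_ne_top]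

lemma uniformCube_preimage_const_add_le (hτ : 0 < τ) (x y : Fin p → ℝ) {E : Set (Fin p → ℝ)}
    (hE : MeasurableSet E) :
    uniformCube p τ ((x + ·) ⁻¹' E) ≤
      uniformCube p τ ((y + ·) ⁻¹' E) + ENNReal.ofReal (∑ i, |x i - y i| / (2 * τ)) := by
  set Bx := Icc (fun i => x i - τ) (fun i => x i + τ)
  set By := Icc (fun i => y i - τ) (fun i => y i + τ)
  set c := ENNReal.ofReal ((2 * τ) ^ p)
  set r := ENNReal.ofReal (∑ i, |x i - y i| / (2 * τ))
  have hcover : volume (E ∩ Bx) ≤ volume (E ∩ By) + volume (Bx \ By) := by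
    have hsub : E ∩ Bx ⊆ (E ∩ By) ∪ (Bx \ By) := fun e he =>
      (em (e ∈ By)).imp (fun h => ⟨he.1, h⟩) (fun h => ⟨he.2, h⟩)
    exact (measure_mono hsub).trans (measure_union_le _ _)
  have hsdiff := volume_Icc_pi_sub_add_sdiff_le x y hτ
  rw [Fintype.card_fin, ofReal_mul (by positivity)] at hsdiff
  rw [uniformCube_preimage_const_add x hE, uniformCube_preimage_const_add y hE]
  calc c⁻¹ * volume (E ∩ Bx) ≤ c⁻¹ * (volume (E ∩ By) + c * r) :=
        mul_le_mul_right (hcover.trans (add_le_add_right hsdiff _)) _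
    _ = c⁻¹ * volume (E ∩ By) + r := by
        rw [mul_add, ← mul_assoc, ENNReal.inv_mul_cancel (by positivity) ofReal_ne_top, one_mul]

lemma tvDist_uniformCube_map_const_add_le (hτ : 0 < τ) (x y : Fin p → ℝ) :
    tvDist ((uniformCube p τ).map (x + ·)) ((uniformCube p τ).map (y + ·)) ≤
      ∑ i, |x i - y i| / (2 * τ) := by
  have := isProbabilityMeasure_uniformCube (p := p) hτ
  refine tvDist_le_of_forall fun E hE => ?_
  have hreal : ∀ x y : Fin p → ℝ, (uniformCube p τ).real ((x + ·) ⁻¹' E) ≤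
      (uniformCube p τ).real ((y + ·) ⁻¹' E) + ∑ i, |x i - y i| / (2 * τ) := by
    intro x y
    have h := ENNReal.toReal_mono (add_ne_top.mpr ⟨measure_ne_top _ _, ofReal_ne_top⟩)
      (uniformCube_preimage_const_add_le hτ x y hE)
    rwa [toReal_add (measure_ne_top _ _) ofReal_ne_top, toReal_ofReal (by positivity)] at h
  have hsymm : ∑ i, |y i - x i| / (2 * τ) = ∑ i, |x i - y i| / (2 * τ) := by
    simp_rw [abs_sub_comm]
  rw [map_measureReal_apply (measurable_const_add x) hE,
    map_measureReal_apply (measurable_const_add y) hE, abs_sub_le_iff]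
  constructor <;> linarith [hreal x y, hreal y x]

end UniformCube

lemma sum_abs_sub_le_card_mul_norm_sub {ι : Type*} [Fintype ι] (x y : ι → ℝ) :
    ∑ i, |x i - y i| ≤ Fintype.card ι * ‖x - y‖ := by
  calc ∑ i, |x i - y i| ≤ ∑ _i : ι, ‖x - y‖ :=
        Finset.sum_le_sum fun i _ => norm_le_pi_norm (x - y) i
    _ = Fintype.card ι * ‖x - y‖ := by rw [Finset.sum_const, Finset.card_univ, nsmul_eq_mul]

lemma tvDist_map_add_uniformCube_le {C : Type*} [MeasurableSpace C] {p : ℕ} {τ η' ε : ℝ}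
    (hτ : 0 < τ) (hη' : 0 ≤ η') (ν : Measure C) [IsProbabilityMeasure ν] {a : C → Fin p → ℝ}
    (ha : Measurable a) (b : Fin p → ℝ) (hbad : ν.real {c | ‖a c - b‖ ≤ η'}ᶜ ≤ ε) :
    tvDist ((ν.prod (uniformCube p τ)).map fun ce => a ce.1 + ce.2)
      ((uniformCube p τ).map (b + ·)) ≤ ε + p * η' / (2 * τ) := by
  have := isProbabilityMeasure_uniformCube (p := p) hτ
  have hgood : MeasurableSet {c | ‖a c - b‖ ≤ η'} :=
    measurableSet_le (ha.sub measurable_const).norm measurable_const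
  refine (tvDist_map_prod_le ν (uniformCube p τ) (by fun_prop) (measurable_const_add b)
    hgood.compl (κ := p * η' / (2 * τ)) (by positivity) fun c hc => ?_).trans (by linarith)
  refine (tvDist_uniformCube_map_const_add_le hτ (a c) b).trans ?_
  rw [← Finset.sum_div]
  gcongr
  calc ∑ i, |a c i - b i| ≤ p * ‖a c - b‖ := by
        simpa using sum_abs_sub_le_card_mul_norm_sub (a c) b
    _ ≤ p * η' := by gcongr; exact not_not.mp hc

section Probability

variable {Ω : Type*} [MeasurableSpace Ω] {m : Measure Ω} [IsProbabilityMeasure m] {G : Set Ω}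

lemma prob_compl_le_of_ofReal_one_sub_le (hG : MeasurableSet G) {t : ℝ}
    (h : ENNReal.ofReal (1 - t) ≤ m G) : m Gᶜ ≤ ENNReal.ofReal t := by
  rw [prob_compl_eq_one_sub hG, tsub_le_iff_left, ← ofReal_one]
  calc ENNReal.ofReal 1 = ENNReal.ofReal (1 - t + t) := by ring_nf
    _ ≤ ENNReal.ofReal (1 - t) + ENNReal.ofReal t := ofReal_add_le
    _ ≤ m G + ENNReal.ofReal t := by gcongr

lemma ofReal_one_sub_le_prob_compl (hG : MeasurableSet G) {t : ℝ} (ht : 0 ≤ t)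
    (h : m G ≤ ENNReal.ofReal t) : ENNReal.ofReal (1 - t) ≤ m Gᶜ := by
  rw [prob_compl_eq_one_sub hG, ofReal_sub 1 ht, ofReal_one]
  exact tsub_le_tsub_left h 1

end Probability

lemma measure_setOf_le_measure_prodMk_preimage_le {S C : Type*} [MeasurableSpace S]
    [MeasurableSpace C] (μ : Measure S) (ν : Measure C) [SFinite ν] {B : Set (S × C)}
    (hB : MeasurableSet B) {δ ε : ℝ} (hε : 0 < ε) (h : μ.prod ν B ≤ ENNReal.ofReal (δ * ε)) :
    μ {s | ENNReal.ofReal ε ≤ ν (Prod.mk s ⁻¹' B)} ≤ ENNReal.ofReal δ := by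
  rw [← ENNReal.mul_le_mul_iff_right (ofReal_pos.mpr hε).ne' ofReal_ne_top]
  calc ENNReal.ofReal ε * μ {s | ENNReal.ofReal ε ≤ ν (Prod.mk s ⁻¹' B)}
      ≤ ∫⁻ s, ν (Prod.mk s ⁻¹' B) ∂μ :=
        mul_meas_ge_le_lintegral₀ (measurable_measure_prodMk_left hB).aemeasurable _
    _ = μ.prod ν B := (Measure.prod_apply hB).symm
    _ ≤ ENNReal.ofReal (δ * ε) := h
    _ = ENNReal.ofReal ε * ENNReal.ofReal δ := by rw [ofReal_mul' hε.le, mul_comm]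

theorem stmt6_general {d p : ℕ}
    {S C : Type*} [MeasurableSpace S] [MeasurableSpace C]
    (μ : Measure S) [IsProbabilityMeasure μ]
    (ν : (Fin d → ℝ) → Measure C) (hνprob : ∀ u, IsProbabilityMeasure (ν u))
    (A : S × C × (Fin d → ℝ) → (Fin p → ℝ)) (hA : Measurable A)
    (f : (Fin d → ℝ) → (Fin p → ℝ))
    (η' τ : ℝ) (hη' : 0 < η') (hτ : 0 < τ)
    (δ ε₀ : ℝ) (hδ : δ ∈ Set.Ioc (0 : ℝ) 1) (hε₀ : ε₀ ∈ Set.Ioc (0 : ℝ) 1)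
    (happrox : ∀ u : Fin d → ℝ,
      ENNReal.ofReal (1 - δ * ε₀) ≤
        (μ.prod (ν u)) {sc | ‖A (sc.1, sc.2, u) - f u‖ ≤ η'}) :
    ∀ u : Fin d → ℝ,
      ENNReal.ofReal (1 - δ) ≤
        μ {s | tvDist
            (((ν u).prod (uniformCube p τ)).map (fun ce => A (s, ce.1, u) + ce.2))
            ((uniformCube p τ).map (fun e => f u + e))
          ≤ ε₀ + (p : ℝ) * η' / (2 * τ)} := by
  intro u
  have := hνprob u
  have hgood : MeasurableSet {sc : S × C | ‖A (sc.1, sc.2, u) - f u‖ ≤ η'} :=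
    measurableSet_le ((hA.comp (by fun_prop)).sub measurable_const).norm measurable_const
  set bad := {sc : S × C | ‖A (sc.1, sc.2, u) - f u‖ ≤ η'}ᶜ
  set heavy := {s | ENNReal.ofReal ε₀ ≤ ν u (Prod.mk s ⁻¹' bad)}
  have hheavy : μ heavy ≤ ENNReal.ofReal δ := measure_setOf_le_measure_prodMk_preimage_le μ (ν u)
    hgood.compl hε₀.1 (prob_compl_le_of_ofReal_one_sub_le hgood (happrox u))
  have hlight : heavyᶜ ⊆ {s | tvDist
      (((ν u).prod (uniformCube p τ)).map (fun ce => A (s, ce.1, u) + ce.2))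
      ((uniformCube p τ).map (fun e => f u + e)) ≤ ε₀ + (p : ℝ) * η' / (2 * τ)} := fun s hs =>
    tvDist_map_add_uniformCube_le hτ hη'.le (ν u) (a := fun c => A (s, c, u))
      (hA.comp (by fun_prop)) (f u) (toReal_le_of_le_ofReal hε₀.1.le (le_of_not_ge hs))
  exact (ofReal_one_sub_le_prob_compl (measurable_measure_prodMk_left hgood.compl measurableSet_Ici)
    hδ.1.le hheavy).trans (measure_mono hlight)

/-- Adding uniform noise induces pseudo-independence (dimension-explicit form):
if `A(s, c, u)` is within `η'` of `f(u)` in `ℓ_∞` with probability `≥ 1 - δ·ε₀`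
over `(s, c) ∼ μ ⊗ ν_u`, then for every `u`, with probability `≥ 1 - δ` over
`s ∼ μ`, the law of `(c, e) ↦ A(s, c, u) + e` under `ν_u ⊗ Unif[-τ,τ]^p` is
within `ε₀ + pη'/(2τ)` in total variation of the law of `e ↦ f(u) + e`. -/
theorem stmt6 {d p : ℕ} (hd : 1 ≤ d) (hp : 1 ≤ p)
    {S C : Type*} [MeasurableSpace S] [MeasurableSpace C]
    (μ : Measure S) [IsProbabilityMeasure μ]
    (ν : (Fin d → ℝ) → Measure C) (hνprob : ∀ u, IsProbabilityMeasure (ν u))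
    (hνmeas : ∀ B : Set C, MeasurableSet B → Measurable fun u => ν u B)
    (A : S × C × (Fin d → ℝ) → (Fin p → ℝ)) (hA : Measurable A)
    (f : (Fin d → ℝ) → (Fin p → ℝ))
    (η' τ : ℝ) (hη' : 0 < η') (hτ : 0 < τ)
    (δ ε₀ : ℝ) (hδ : δ ∈ Set.Ioc (0 : ℝ) 1) (hε₀ : ε₀ ∈ Set.Ioc (0 : ℝ) 1)
    (happrox : ∀ u : Fin d → ℝ,
      ENNReal.ofReal (1 - δ * ε₀) ≤
        (μ.prod (ν u)) {sc | ‖A (sc.1, sc.2, u) - f u‖ ≤ η'}) :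
    ∀ u : Fin d → ℝ,
      ENNReal.ofReal (1 - δ) ≤
        μ {s | tvDist
            (((ν u).prod (uniformCube p τ)).map (fun ce => A (s, ce.1, u) + ce.2))
            ((uniformCube p τ).map (fun e => f u + e))
          ≤ ε₀ + (p : ℝ) * η' / (2 * τ)} :=
  stmt6_general μ ν hνprob A hA f η' τ hη' hτ δ ε₀ hδ hε₀ happrox
end

section
/- Consider a finite discounted MDP with states S, action sets A_s and transitions p, let 0 ≤ γ' ≤ γ < 1 and r : 𝒜 → ℝ. Let v* : S → ℝ be the unique fixed point of T_{γ,r}, and let v : S → ℝ satisfy v(s) ≤ v*(s) for all s. Define r'(s,a) := r(s,a) + (γ − γ')·∑_{s'∈S} p(s,a)(s')·v(s'), and let w : S → ℝ be the unique fixed point of T_{γ', r'}. Then w(s) ≤ v*(s) for all s ∈ S. -/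
/-!
The adjusted reward makes `v*` a supersolution of the new Bellman equation,
`T_{γ',r'}[v*] ≤ T_{γ,r}[v*] = v*`, because `(γ - γ')·Pv ≤ (γ - γ')·Pv*`.
A fixed point `w` of a monotone operator that commutes with adding constants up
to the factor `γ' < 1` lies below every supersolution: if `M = max (w - v*)` is
attained at `s₀`, then `w(s₀) ≤ T[v* + M](s₀) ≤ v*(s₀) + γ' M`, so `M ≤ γ' M`
and `M ≤ 0`.
-/

/-- Bellman optimality operator of a finite MDP: `T_{γ,r}[v](s) =
max_{a ∈ A s} ( r(s,a) + γ ∑_{s'} p(s,a)(s') v(s') )`. -/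
noncomputable def bellman {S : Type*} [Fintype S] {A : S → Type*}
    [∀ s, Fintype (A s)]
    (p : (s : S) → A s → S → ℝ) (γ : ℝ) (r : (s : S) → A s → ℝ)
    (v : S → ℝ) : S → ℝ :=
  fun s => ⨆ a : A s, (r s a + γ * ∑ s' : S, p s a s' * v s')

theorem sum_mul_le_sum_mul_add_of_le_add {S : Type*} [Fintype S] {q v u : S → ℝ} {c : ℝ}
    (hq0 : ∀ s, 0 ≤ q s) (hq1 : ∑ s, q s = 1) (h : ∀ s, v s ≤ u s + c) :
    ∑ s, q s * v s ≤ ∑ s, q s * u s + c :=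
  calc ∑ s, q s * v s ≤ ∑ s, q s * (u s + c) :=
        Finset.sum_le_sum fun s _ => mul_le_mul_of_nonneg_left (h s) (hq0 s)
    _ = ∑ s, q s * u s + c := by
        simp only [mul_add, Finset.sum_add_distrib, ← Finset.sum_mul, hq1, one_mul]

namespace bellman

variable {S : Type*} [Fintype S] {A : S → Type*} [∀ s, Fintype (A s)]
  {p : (s : S) → A s → S → ℝ} {γ : ℝ} {r : (s : S) → A s → ℝ}

theorem le_apply (v : S → ℝ) (s : S) (a : A s) :
    r s a + γ * ∑ s', p s a s' * v s' ≤ bellman p γ r v s :=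
  le_ciSup (f := fun a => r s a + γ * ∑ s', p s a s' * v s') (Set.finite_range _).bddAbove a

theorem apply_le_iff [∀ s, Nonempty (A s)] {v : S → ℝ} {s : S} {c : ℝ} :
    bellman p γ r v s ≤ c ↔ ∀ a, r s a + γ * ∑ s', p s a s' * v s' ≤ c :=
  ciSup_le_iff (Set.finite_range _).bddAbove

theorem apply_le_apply_add_of_le_add [∀ s, Nonempty (A s)]
    (hp0 : ∀ s a s', 0 ≤ p s a s') (hp1 : ∀ s a, ∑ s', p s a s' = 1) (hγ : 0 ≤ γ)
    {v u : S → ℝ} {c : ℝ} (h : ∀ s, v s ≤ u s + c) (s : S) :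
    bellman p γ r v s ≤ bellman p γ r u s + γ * c :=
  apply_le_iff.2 fun a =>
    calc r s a + γ * ∑ s', p s a s' * v s'
        ≤ r s a + γ * (∑ s', p s a s' * u s' + c) := by
          gcongr
          exact sum_mul_le_sum_mul_add_of_le_add (hp0 s a) (hp1 s a) h
      _ = (r s a + γ * ∑ s', p s a s' * u s') + γ * c := by ring
      _ ≤ bellman p γ r u s + γ * c := by grw [le_apply u s a]

theorem le_of_eq_bellman_of_bellman_le [∀ s, Nonempty (A s)]
    (hp0 : ∀ s a s', 0 ≤ p s a s') (hp1 : ∀ s a, ∑ s', p s a s' = 1)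
    (hγ0 : 0 ≤ γ) (hγ1 : γ < 1) {w u : S → ℝ} (hw : w = bellman p γ r w)
    (hu : ∀ s, bellman p γ r u s ≤ u s) (s : S) : w s ≤ u s := by
  have : Nonempty S := ⟨s⟩
  obtain ⟨s₀, hs₀⟩ := Finite.exists_max fun s => w s - u s
  set M := w s₀ - u s₀
  have hwM : ∀ s, w s ≤ u s + M := fun s => by linarith [hs₀ s]
  have hM : w s₀ ≤ u s₀ + γ * M :=
    calc w s₀ = bellman p γ r w s₀ := congrFun hw s₀
      _ ≤ bellman p γ r u s₀ + γ * M := apply_le_apply_add_of_le_add hp0 hp1 hγ0 hwM s₀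
      _ ≤ u s₀ + γ * M := by grw [hu s₀]
  have : M ≤ 0 := by nlinarith
  linarith [hwM s]

theorem adjustedReward_apply_le [∀ s, Nonempty (A s)] (hp0 : ∀ s a s', 0 ≤ p s a s')
    {γ' : ℝ} (hγ'γ : γ' ≤ γ) {v u : S → ℝ} (hv : ∀ s, v s ≤ u s) (s : S) :
    bellman p γ' (fun s a => r s a + (γ - γ') * ∑ s', p s a s' * v s') u s
      ≤ bellman p γ r u s :=
  apply_le_iff.2 fun a => by
    have hPv : ∑ s', p s a s' * v s' ≤ ∑ s', p s a s' * u s' :=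
      Finset.sum_le_sum fun s' _ => mul_le_mul_of_nonneg_left (hv s') (hp0 s a s')
    calc r s a + (γ - γ') * ∑ s', p s a s' * v s' + γ' * ∑ s', p s a s' * u s'
        ≤ r s a + (γ - γ') * ∑ s', p s a s' * u s' + γ' * ∑ s', p s a s' * u s' := by
          gcongr
      _ = r s a + γ * ∑ s', p s a s' * u s' := by ring
      _ ≤ bellman p γ r u s := le_apply u s a

end bellman

theorem stmt12_general {S : Type*} [Fintype S] {A : S → Type*}
    [∀ s, Fintype (A s)] [∀ s, Nonempty (A s)]
    (p : (s : S) → A s → S → ℝ)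
    (hp0 : ∀ s a s', 0 ≤ p s a s') (hp1 : ∀ s a, ∑ s' : S, p s a s' = 1)
    (γ γ' : ℝ) (hγ'0 : 0 ≤ γ') (hγ'γ : γ' ≤ γ) (hγ1 : γ < 1)
    (r : (s : S) → A s → ℝ)
    (vstar : S → ℝ) (hvstar : vstar = bellman p γ r vstar)
    (v : S → ℝ) (hv : ∀ s, v s ≤ vstar s)
    (r' : (s : S) → A s → ℝ)
    (hr' : ∀ s a, r' s a = r s a + (γ - γ') * ∑ s' : S, p s a s' * v s')
    (w : S → ℝ) (hw : w = bellman p γ' r' w) :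
    ∀ s : S, w s ≤ vstar s := by
  obtain rfl : r' = fun s a => r s a + (γ - γ') * ∑ s' : S, p s a s' * v s' :=
    funext fun s => funext (hr' s)
  refine bellman.le_of_eq_bellman_of_bellman_le hp0 hp1 hγ'0 (hγ'γ.trans_lt hγ1) hw fun s => ?_
  calc bellman p γ' _ vstar s ≤ bellman p γ r vstar s :=
        bellman.adjustedReward_apply_le hp0 hγ'γ hv s
    _ = vstar s := (congrFun hvstar s).symm

/-- Comparison lemma for the Proximal Reward Method: let `v*` be the fixed point
of `T_{γ,r}` and `v ≤ v*` entrywise; with adjusted reward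
`r'(s,a) = r(s,a) + (γ - γ')·(Pv)(s,a)` and `0 ≤ γ' ≤ γ < 1`, the fixed point `w`
of `T_{γ',r'}` satisfies `w ≤ v*` entrywise. -/
theorem stmt12 {S : Type*} [Fintype S] [Nonempty S] {A : S → Type*}
    [∀ s, Fintype (A s)] [∀ s, Nonempty (A s)]
    (p : (s : S) → A s → S → ℝ)
    (hp0 : ∀ s a s', 0 ≤ p s a s') (hp1 : ∀ s a, ∑ s' : S, p s a s' = 1)
    (γ γ' : ℝ) (hγ'0 : 0 ≤ γ') (hγ'γ : γ' ≤ γ) (hγ1 : γ < 1)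
    (r : (s : S) → A s → ℝ)
    (vstar : S → ℝ) (hvstar : vstar = bellman p γ r vstar)
    (v : S → ℝ) (hv : ∀ s, v s ≤ vstar s)
    (r' : (s : S) → A s → ℝ)
    (hr' : ∀ s a, r' s a = r s a + (γ - γ') * ∑ s' : S, p s a s' * v s')
    (w : S → ℝ) (hw : w = bellman p γ' r' w) :
    ∀ s : S, w s ≤ vstar s :=
  stmt12_general p hp0 hp1 γ γ' hγ'0 hγ'γ hγ1 r vstar hvstar v hv r' hr' w hw
end

section
/- Consider a finite discounted MDP with states S, action sets A_s and transitions p, let r : 𝒜 → ℝ with r(s,a) ≥ 0 for all (s,a), let 0 < γ' ≤ γ < 1, and let η ≥ 0. Let v* be the unique fixed point of T_{γ,r}. Let v^{(0)} := 0, and suppose a sequence v^{(1)}, v^{(2)}, … of functions S → ℝ is given such that for every t ≥ 1, setting r^{(t)}(s,a) := r(s,a) + (γ − γ')·∑_{s'∈S} p(s,a)(s')·v^{(t−1)}(s') and letting w^{(t)} be the unique fixed point of T_{γ', r^{(t)}}, one has w^{(t)}(s) − η ≤ v^{(t)}(s) ≤ w^{(t)}(s) for all s ∈ S. Then for every integer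 T ≥ 1 and every s ∈ S: 0 ≤ v*(s) − v^{(T)}(s) ≤ ((γ − γ')/(1 − γ'))^T · max_{s'∈S} v*(s') + ((1 − γ')/(1 − γ))·η. -/
theorem sum_mul_le_sum_mul_add {ι : Type*} [Fintype ι] {q u w : ι → ℝ} {c : ℝ}
    (hq0 : ∀ i, 0 ≤ q i) (hq1 : ∑ i, q i = 1) (h : ∀ i, u i ≤ w i + c) :
    ∑ i, q i * u i ≤ ∑ i, q i * w i + c :=
  calc ∑ i, q i * u i ≤ ∑ i, q i * (w i + c) :=
        Finset.sum_le_sum fun i _ => mul_le_mul_of_nonneg_left (h i) (hq0 i)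
    _ = ∑ i, q i * w i + c := by
        simp only [mul_add, Finset.sum_add_distrib, ← Finset.sum_mul, hq1, one_mul]

theorem le_pow_mul_add_div_of_le_mul_add {e : ℕ → ℝ} {β η : ℝ} (hβ0 : 0 ≤ β) (hβ1 : β < 1)
    (hη : 0 ≤ η) (h : ∀ t, e (t + 1) ≤ β * e t + η) (t : ℕ) : e t ≤ β ^ t * e 0 + η / (1 - β) := by
  induction t with
  | zero => simpa using div_nonneg hη (sub_nonneg.2 hβ1.le)
  | succ t ih =>
    have h1β : 1 - β ≠ 0 := by linarith
    calc e (t + 1) ≤ β * e t + η := h t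
      _ ≤ β * (β ^ t * e 0 + η / (1 - β)) + η := by gcongr
      _ = β ^ (t + 1) * e 0 + η / (1 - β) := by field_simp; ring

section Bellman

variable {S : Type*} [Fintype S] {A : S → Type*} [∀ s, Fintype (A s)]
  {p : (s : S) → A s → S → ℝ}

theorem bellman_le_bellman_add [∀ s, Nonempty (A s)] {γ₁ γ₂ c : ℝ}
    {r₁ r₂ : (s : S) → A s → ℝ} {v₁ v₂ : S → ℝ} {s : S}
    (h : ∀ a : A s, r₁ s a + γ₁ * ∑ s', p s a s' * v₁ s'
        ≤ r₂ s a + γ₂ * ∑ s', p s a s' * v₂ s' + c) :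
    bellman p γ₁ r₁ v₁ s ≤ bellman p γ₂ r₂ v₂ s + c :=
  ciSup_le fun a => (h a).trans <|
    add_le_add_left (le_ciSup (Finite.bddAbove_range _) a : _ ≤ bellman p γ₂ r₂ v₂ s) c

theorem bellman_zero [∀ s, Nonempty (A s)] (γ : ℝ) : bellman p γ (fun _ _ => 0) 0 = 0 := by
  funext s
  simp [bellman]

/-- The reward `r⁽ᵗ⁾` of the Proximal Reward Method, for `u = v⁽ᵗ⁻¹⁾`. -/
def proximalReward (p : (s : S) → A s → S → ℝ) (γ γ' : ℝ) (r : (s : S) → A s → ℝ)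
    (u : S → ℝ) : (s : S) → A s → ℝ :=
  fun s a => r s a + (γ - γ') * ∑ s', p s a s' * u s'

theorem bellman_eq_bellman_proximalReward (γ γ' : ℝ) (r : (s : S) → A s → ℝ) (v : S → ℝ) :
    bellman p γ r v = bellman p γ' (proximalReward p γ γ' r v) v := by
  funext s
  simp only [bellman, proximalReward]
  congr 1
  funext a
  ring

variable [Nonempty S] [∀ s, Nonempty (A s)]
  (hp0 : ∀ s a s', 0 ≤ p s a s') (hp1 : ∀ s a, ∑ s', p s a s' = 1)
include hp0 hp1

theorem sub_le_div_of_eq_bellman {γ δ : ℝ} (hγ0 : 0 ≤ γ) (hγ1 : γ < 1)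
    {r₁ r₂ : (s : S) → A s → ℝ} {w₁ w₂ : S → ℝ}
    (h₁ : w₁ = bellman p γ r₁ w₁) (h₂ : w₂ = bellman p γ r₂ w₂)
    (hr : ∀ s a, r₁ s a ≤ r₂ s a + δ) (s : S) : w₁ s - w₂ s ≤ δ / (1 - γ) := by
  set M := ⨆ s', (w₁ s' - w₂ s')
  have hM : ∀ s', w₁ s' ≤ w₂ s' + M := fun s' =>
    sub_le_iff_le_add'.1 (le_ciSup (Finite.bddAbove_range fun s' => w₁ s' - w₂ s') s')
  have hstep : M ≤ δ + γ * M := ciSup_le fun s' => by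
    have : w₁ s' ≤ w₂ s' + (δ + γ * M) := by
      rw [h₁, h₂]
      refine bellman_le_bellman_add fun a => ?_
      have := mul_le_mul_of_nonneg_left (sum_mul_le_sum_mul_add (hp0 s' a) (hp1 s' a) hM) hγ0
      linarith [hr s' a]
    linarith
  rw [le_div_iff₀ (by linarith)]
  nlinarith [le_ciSup (Finite.bddAbove_range fun s' => w₁ s' - w₂ s') s]

theorem nonneg_of_eq_bellman {γ : ℝ} (hγ0 : 0 ≤ γ) (hγ1 : γ < 1) {r : (s : S) → A s → ℝ}
    (hr0 : ∀ s a, 0 ≤ r s a) {w : S → ℝ} (hw : w = bellman p γ r w) (s : S) : 0 ≤ w s := by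
  have := sub_le_div_of_eq_bellman hp0 hp1 hγ0 hγ1 (bellman_zero γ).symm hw (δ := 0)
    (fun s a => by simpa using hr0 s a) s
  simpa using this

theorem sub_le_of_eq_bellman_proximalReward {γ γ' δ : ℝ} (hγ'0 : 0 ≤ γ') (hγ'γ : γ' ≤ γ)
    (hγ'1 : γ' < 1) {r : (s : S) → A s → ℝ} {u₁ u₂ w₁ w₂ : S → ℝ}
    (h₁ : w₁ = bellman p γ' (proximalReward p γ γ' r u₁) w₁)
    (h₂ : w₂ = bellman p γ' (proximalReward p γ γ' r u₂) w₂)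
    (hu : ∀ s, u₁ s ≤ u₂ s + δ) (s : S) :
    w₁ s - w₂ s ≤ (γ - γ') / (1 - γ') * δ := by
  rw [div_mul_eq_mul_div]
  refine sub_le_div_of_eq_bellman hp0 hp1 hγ'0 hγ'1 h₁ h₂ (fun s a => ?_) s
  have := mul_le_mul_of_nonneg_left (sum_mul_le_sum_mul_add (hp0 s a) (hp1 s a) hu)
    (sub_nonneg.2 hγ'γ)
  simp only [proximalReward]
  linarith

end Bellman

theorem stmt13_general {S : Type*} [Fintype S] {A : S → Type*}
    [∀ s, Fintype (A s)] [∀ s, Nonempty (A s)]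
    (p : (s : S) → A s → S → ℝ)
    (hp0 : ∀ s a s', 0 ≤ p s a s') (hp1 : ∀ s a, ∑ s' : S, p s a s' = 1)
    (γ γ' : ℝ) (hγ'0 : 0 < γ') (hγ'γ : γ' ≤ γ) (hγ1 : γ < 1)
    (r : (s : S) → A s → ℝ) (hr0 : ∀ s a, 0 ≤ r s a)
    (η : ℝ) (hη : 0 ≤ η)
    (vstar : S → ℝ) (hvstar : vstar = bellman p γ r vstar)
    (v : ℕ → S → ℝ) (hv0 : v 0 = 0)
    (W : ℕ → S → ℝ)
    (hW : ∀ t : ℕ, W t =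
      bellman p γ' (fun s a => r s a + (γ - γ') * ∑ s' : S, p s a s' * v t s') (W t))
    (hsandwich : ∀ (t : ℕ) (s : S), W t s - η ≤ v (t + 1) s ∧ v (t + 1) s ≤ W t s) :
    ∀ (T : ℕ), 1 ≤ T → ∀ s : S,
      0 ≤ vstar s - v T s ∧
      vstar s - v T s ≤
        ((γ - γ') / (1 - γ')) ^ T * (⨆ s' : S, vstar s') + ((1 - γ') / (1 - γ)) * η := by
  intro T _ s
  have : Nonempty S := ⟨s⟩
  have h1γ' : 0 < 1 - γ' := by linarith
  have h1γ : 0 < 1 - γ := by linarith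
  have hvstar' := hvstar.trans (bellman_eq_bellman_proximalReward γ γ' r vstar)
  have hv_le : ∀ t s, v t s ≤ vstar s := by
    intro t
    induction t with
    | zero => simpa [hv0] using nonneg_of_eq_bellman hp0 hp1 (by linarith) hγ1 hr0 hvstar
    | succ t ih =>
      intro s
      have := sub_le_of_eq_bellman_proximalReward hp0 hp1 hγ'0.le hγ'γ (by linarith) (hW t)
        hvstar' (δ := 0) (by simpa using ih) s
      linarith [(hsandwich t s).2]
  set e : ℕ → ℝ := fun t => ⨆ s', (vstar s' - v t s')
  have he : ∀ t s, vstar s - v t s ≤ e t := fun t => le_ciSup (Finite.bddAbove_range _)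
  have hrec : ∀ t, e (t + 1) ≤ (γ - γ') / (1 - γ') * e t + η := fun t => ciSup_le fun s => by
    have := sub_le_of_eq_bellman_proximalReward hp0 hp1 hγ'0.le hγ'γ (by linarith) hvstar'
      (hW t) (fun s => sub_le_iff_le_add'.1 (he t s)) s
    linarith [(hsandwich t s).1]
  have hβ1 : (γ - γ') / (1 - γ') < 1 := by rw [div_lt_one h1γ']; linarith
  have h1β : 1 - (γ - γ') / (1 - γ') = (1 - γ) / (1 - γ') := by field_simp; ring
  refine ⟨sub_nonneg.2 (hv_le T s), (he T s).trans ?_⟩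
  calc e T ≤ ((γ - γ') / (1 - γ')) ^ T * e 0 + η / (1 - (γ - γ') / (1 - γ')) :=
        le_pow_mul_add_div_of_le_mul_add (div_nonneg (by linarith) h1γ'.le) hβ1 hη hrec T
    _ = _ := by simp only [e, hv0, Pi.zero_apply, sub_zero, h1β]; field_simp

/-- Convergence of the Proximal Reward Method: let `v*` be the fixed point of
`T_{γ,r}` with `r ≥ 0` and `0 < γ' ≤ γ < 1`. Starting from `v⁽⁰⁾ = 0`, suppose at
each step `t ≥ 1` the iterate `v⁽ᵗ⁾` sandwiches the fixed point `w⁽ᵗ⁾` of the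
`γ'`-discounted Bellman operator with reward
`r⁽ᵗ⁾(s,a) = r(s,a) + (γ - γ')·(P v⁽ᵗ⁻¹⁾)(s,a)` as `w⁽ᵗ⁾ - η ≤ v⁽ᵗ⁾ ≤ w⁽ᵗ⁾`.
Then for all `T ≥ 1` and all `s`,
`0 ≤ v*(s) - v⁽ᵀ⁾(s) ≤ ((γ-γ')/(1-γ'))^T · max_{s'} v*(s') + ((1-γ')/(1-γ))·η`. -/
theorem stmt13 {S : Type*} [Fintype S] [Nonempty S] {A : S → Type*}
    [∀ s, Fintype (A s)] [∀ s, Nonempty (A s)]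
    (p : (s : S) → A s → S → ℝ)
    (hp0 : ∀ s a s', 0 ≤ p s a s') (hp1 : ∀ s a, ∑ s' : S, p s a s' = 1)
    (γ γ' : ℝ) (hγ'0 : 0 < γ') (hγ'γ : γ' ≤ γ) (hγ1 : γ < 1)
    (r : (s : S) → A s → ℝ) (hr0 : ∀ s a, 0 ≤ r s a)
    (η : ℝ) (hη : 0 ≤ η)
    (vstar : S → ℝ) (hvstar : vstar = bellman p γ r vstar)
    (v : ℕ → S → ℝ) (hv0 : v 0 = 0)
    (W : ℕ → S → ℝ)
    (hW : ∀ t : ℕ, W t =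
      bellman p γ' (fun s a => r s a + (γ - γ') * ∑ s' : S, p s a s' * v t s') (W t))
    (hsandwich : ∀ (t : ℕ) (s : S), W t s - η ≤ v (t + 1) s ∧ v (t + 1) s ≤ W t s) :
    ∀ (T : ℕ), 1 ≤ T → ∀ s : S,
      0 ≤ vstar s - v T s ∧
      vstar s - v T s ≤
        ((γ - γ') / (1 - γ')) ^ T * (⨆ s' : S, vstar s') + ((1 - γ') / (1 - γ)) * η :=
  stmt13_general p hp0 hp1 γ γ' hγ'0 hγ'γ hγ1 r hr0 η hη vstar hvstar v hv0 W hW hsandwich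
end

section
/- Consider a finite discounted MDP with states S, action sets A_s and transitions p, let 0 ≤ γ' ≤ γ < 1, let r : 𝒜 → ℝ, let π be a policy, and let v : S → ℝ be arbitrary. Define r'(s,a) := r(s,a) + (γ − γ')·∑_{s'∈S} p(s,a)(s')·v(s'). Let u be the (γ, r)-value of π and w be the (γ', r')-value of π. Then, writing P^π for the S×S matrix with entries P^π(s,s') := p(s, π(s))(s'), the exact identity (I − γ'·P^π)(u − w) = (γ − γ')·P^π(u − v) holds, and consequently ‖u − w‖_∞ ≤ ((γ − γ')/(1 − γ'))·‖u − v‖_∞. -/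
/-!
Subtracting the two Bellman equations, the reward shift `(γ - γ')·P v` turns `u - w` into the
`(γ', ·)`-value of the reward `(γ - γ')·P^π (u - v)`, which is the stated identity. Since
`P^π` is row-stochastic it does not increase the sup norm, so the identity gives
`‖u - w‖ ≤ γ'‖u - w‖ + (γ - γ')‖u - v‖`, and `γ' < 1` lets us solve for `‖u - w‖`.
-/

open Finset

section StochasticKernel

variable {S : Type*} [Fintype S] {q : S → S → ℝ}

theorem abs_sum_mul_le_norm_of_stochastic (hq0 : ∀ s s', 0 ≤ q s s')
    (hq1 : ∀ s, ∑ s', q s s' = 1) (s : S) (x : S → ℝ) :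
    |∑ s', q s s' * x s'| ≤ ‖x‖ :=
  calc |∑ s', q s s' * x s'|
      ≤ ∑ s', q s s' * |x s'| := by
        refine (abs_sum_le_sum_abs _ _).trans_eq (sum_congr rfl fun s' _ => ?_)
        rw [abs_mul, abs_of_nonneg (hq0 s s')]
    _ ≤ ∑ s', q s s' * ‖x‖ :=
        sum_le_sum fun s' _ => mul_le_mul_of_nonneg_left (norm_le_pi_norm x s') (hq0 s s')
    _ = ‖x‖ := by rw [← sum_mul, hq1 s, one_mul]

theorem norm_le_div_mul_norm_of_eq_stochastic (hq0 : ∀ s s', 0 ≤ q s s')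
    (hq1 : ∀ s, ∑ s', q s s' = 1) {a b : ℝ} (ha0 : 0 ≤ a) (ha1 : a < 1) (hb : 0 ≤ b)
    {d e : S → ℝ} (hd : ∀ s, d s = a * ∑ s', q s s' * d s' + b * ∑ s', q s s' * e s') :
    ‖d‖ ≤ b / (1 - a) * ‖e‖ := by
  have hrec : ‖d‖ ≤ a * ‖d‖ + b * ‖e‖ := by
    refine (pi_norm_le_iff_of_nonneg (by positivity)).2 fun s => ?_
    rw [Real.norm_eq_abs, hd s]
    calc |a * ∑ s', q s s' * d s' + b * ∑ s', q s s' * e s'|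
        ≤ a * |∑ s', q s s' * d s'| + b * |∑ s', q s s' * e s'| := by
          refine (abs_add_le _ _).trans_eq ?_
          rw [abs_mul, abs_mul, abs_of_nonneg ha0, abs_of_nonneg hb]
      _ ≤ a * ‖d‖ + b * ‖e‖ := by
          gcongr <;> exact abs_sum_mul_le_norm_of_stochastic hq0 hq1 s _
  rw [div_mul_eq_mul_div, le_div_iff₀ (by linarith)]
  linarith

end StochasticKernel

theorem stmt15_general {S : Type*} [Fintype S] {A : S → Type*}
    (p : (s : S) → A s → S → ℝ)
    (hp0 : ∀ s a s', 0 ≤ p s a s') (hp1 : ∀ s a, ∑ s' : S, p s a s' = 1)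
    (γ γ' : ℝ) (hγ'0 : 0 ≤ γ') (hγ'γ : γ' ≤ γ) (hγ1 : γ < 1)
    (r : (s : S) → A s → ℝ) (π : (s : S) → A s) (v : S → ℝ)
    (r' : (s : S) → A s → ℝ)
    (hr' : ∀ s a, r' s a = r s a + (γ - γ') * ∑ s' : S, p s a s' * v s')
    (u : S → ℝ) (hu : ∀ s, u s = r s (π s) + γ * ∑ s' : S, p s (π s) s' * u s')
    (w : S → ℝ) (hw : ∀ s, w s = r' s (π s) + γ' * ∑ s' : S, p s (π s) s' * w s') :
    (∀ s : S,
      (u s - w s) - γ' * ∑ s' : S, p s (π s) s' * (u s' - w s') =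
        (γ - γ') * ∑ s' : S, p s (π s) s' * (u s' - v s')) ∧
    ‖u - w‖ ≤ ((γ - γ') / (1 - γ')) * ‖u - v‖ := by
  have identity : ∀ s : S,
      (u s - w s) - γ' * ∑ s' : S, p s (π s) s' * (u s' - w s') =
        (γ - γ') * ∑ s' : S, p s (π s) s' * (u s' - v s') := by
    intro s
    have hus := hu s
    have hws := hw s
    rw [hr'] at hws
    simp only [mul_sub, sum_sub_distrib] at hus hws ⊢
    linarith
  refine ⟨identity, norm_le_div_mul_norm_of_eq_stochastic (fun s => hp0 s (π s))
    (fun s => hp1 s (π s)) hγ'0 (hγ'γ.trans_lt hγ1) (sub_nonneg.2 hγ'γ) fun s => ?_⟩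
  simp only [Pi.sub_apply]
  linarith [identity s]

/-- Policy values under two discount factors with adjusted rewards: with
`r'(s,a) = r(s,a) + (γ - γ')·(Pv)(s,a)`, if `u` is the `(γ, r)`-value of the
policy `π` and `w` its `(γ', r')`-value, then the exact identity
`(I - γ'P^π)(u - w) = (γ - γ')·P^π(u - v)` holds entrywise, and consequently
`‖u - w‖_∞ ≤ ((γ - γ')/(1 - γ'))·‖u - v‖_∞`. -/
theorem stmt15 {S : Type*} [Fintype S] [Nonempty S] {A : S → Type*}
    [∀ s, Fintype (A s)] [∀ s, Nonempty (A s)]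
    (p : (s : S) → A s → S → ℝ)
    (hp0 : ∀ s a s', 0 ≤ p s a s') (hp1 : ∀ s a, ∑ s' : S, p s a s' = 1)
    (γ γ' : ℝ) (hγ'0 : 0 ≤ γ') (hγ'γ : γ' ≤ γ) (hγ1 : γ < 1)
    (r : (s : S) → A s → ℝ) (π : (s : S) → A s) (v : S → ℝ)
    (r' : (s : S) → A s → ℝ)
    (hr' : ∀ s a, r' s a = r s a + (γ - γ') * ∑ s' : S, p s a s' * v s')
    (u : S → ℝ) (hu : ∀ s, u s = r s (π s) + γ * ∑ s' : S, p s (π s) s' * u s')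
    (w : S → ℝ) (hw : ∀ s, w s = r' s (π s) + γ' * ∑ s' : S, p s (π s) s' * w s') :
    (∀ s : S,
      (u s - w s) - γ' * ∑ s' : S, p s (π s) s' * (u s' - w s') =
        (γ - γ') * ∑ s' : S, p s (π s) s' * (u s' - v s')) ∧
    ‖u - w‖ ≤ ((γ - γ') / (1 - γ')) * ‖u - v‖ :=
  stmt15_general p hp0 hp1 γ γ' hγ'0 hγ'γ hγ1 r π v r' hr' u hu w hw
end

section
/- Consider a finite discounted MDP with states S, action sets A_s and transitions p, let 0 < γ' ≤ γ < 1, r : 𝒜 → ℝ, and α, β ≥ 0. Let v* be the unique fixed point of T_{γ,r}, and let v : S → ℝ satisfy v*(s) − β ≤ v(s) ≤ v*(s) for all s. Define r'(s,a) := r(s,a) + (γ − γ')·∑_{s'∈S} p(s,a)(s')·v(s'), and let v*' be the unique fixed point of T_{γ', r'}. Let π be a policy whose (γ', r')-value w satisfies w(s) ≥ v*'(s) − α for all s. Then the (γ, r)-value u of π satisfies, for all s ∈ S: u(s) ≤ v*(s) and u(s) ≥ v*(s) − ( α·(1 − γ') + (γ − γ')·β )/(1 − γ). -/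
open Finset

section Stochastic

variable {S : Type*} [Fintype S]

lemma sum_mul_le_sum_mul_add_s17 {q : S → ℝ} (hq0 : ∀ s, 0 ≤ q s) (hq1 : ∑ s, q s = 1)
    {f g : S → ℝ} {c : ℝ} (h : ∀ s, f s ≤ g s + c) :
    ∑ s, q s * f s ≤ ∑ s, q s * g s + c :=
  calc ∑ s, q s * f s ≤ ∑ s, q s * (g s + c) :=
        sum_le_sum fun s _ => mul_le_mul_of_nonneg_left (h s) (hq0 s)
    _ = ∑ s, q s * g s + c := by
        simp only [mul_add, sum_add_distrib, ← sum_mul, hq1, one_mul]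

lemma le_div_one_sub_of_le_add_mul_sum {q : S → S → ℝ} (hq0 : ∀ s s', 0 ≤ q s s')
    (hq1 : ∀ s, ∑ s', q s s' = 1) {γ c : ℝ} (hγ0 : 0 ≤ γ) (hγ1 : γ < 1) {f : S → ℝ}
    (hf : ∀ s, f s ≤ c + γ * ∑ s', q s s' * f s') (s : S) :
    f s ≤ c / (1 - γ) := by
  have : Nonempty S := ⟨s⟩
  obtain ⟨s₀, hs₀⟩ := Finite.exists_max f
  have hmean : ∑ s', q s₀ s' * f s' ≤ f s₀ := by
    simpa using sum_mul_le_sum_mul_add_s17 (hq0 s₀) (hq1 s₀) (g := 0) (c := f s₀)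
      fun s' => by simpa using hs₀ s'
  have hs₀_le : f s₀ ≤ c + γ * f s₀ :=
    (hf s₀).trans (by gcongr)
  rw [le_div_iff₀ (by linarith)]
  nlinarith [hs₀ s]

end Stochastic

section Bellman

variable {S : Type*} [Fintype S] {A : S → Type*} {p : (s : S) → A s → S → ℝ}

lemma le_bellman [∀ s, Fintype (A s)] (γ : ℝ) (r : (s : S) → A s → ℝ) (v : S → ℝ)
    (s : S) (a : A s) :
    r s a + γ * ∑ s', p s a s' * v s' ≤ bellman p γ r v s :=
  le_ciSup (f := fun a => r s a + γ * ∑ s', p s a s' * v s')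
    (Set.finite_range _).bddAbove a

lemma exists_bellman_eq [∀ s, Fintype (A s)] (γ : ℝ) (r : (s : S) → A s → ℝ) (v : S → ℝ)
    (s : S) [Nonempty (A s)] :
    ∃ a : A s, bellman p γ r v s = r s a + γ * ∑ s', p s a s' * v s' :=
  (exists_eq_ciSup_of_finite (f := fun a => r s a + γ * ∑ s', p s a s' * v s')).imp
    fun _ ha => ha.symm

lemma policy_value_le_of_eq_bellman [∀ s, Fintype (A s)]
    (hp0 : ∀ s a s', 0 ≤ p s a s') (hp1 : ∀ s a, ∑ s', p s a s' = 1)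
    {γ : ℝ} (hγ0 : 0 ≤ γ) (hγ1 : γ < 1)
    {r : (s : S) → A s → ℝ} {vstar : S → ℝ} (hvstar : vstar = bellman p γ r vstar)
    {π : (s : S) → A s} {u : S → ℝ}
    (hu : ∀ s, u s = r s (π s) + γ * ∑ s', p s (π s) s' * u s') (s : S) :
    u s ≤ vstar s := by
  have key := le_div_one_sub_of_le_add_mul_sum (q := fun s => p s (π s))
    (fun s => hp0 s (π s)) (fun s => hp1 s (π s)) hγ0 hγ1 (c := 0)
    (f := fun s => u s - vstar s) (fun s => by
      have hbel := le_bellman (p := p) γ r vstar s (π s)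
      rw [← hvstar] at hbel
      simp only [mul_sub, sum_sub_distrib]
      linarith [hu s])
  simpa using key s

lemma eq_bellman_sub_eq_bellman_le [∀ s, Fintype (A s)]
    (hp0 : ∀ s a s', 0 ≤ p s a s') (hp1 : ∀ s a, ∑ s', p s a s' = 1)
    {γ γ' β : ℝ} (hγ'0 : 0 ≤ γ') (hγ'γ : γ' ≤ γ) (hγ'1 : γ' < 1) [∀ s, Nonempty (A s)]
    {r r' : (s : S) → A s → ℝ} {vstar vstar' v : S → ℝ}
    (hvstar : vstar = bellman p γ r vstar) (hv : ∀ s, vstar s - β ≤ v s)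
    (hr' : ∀ s a, r' s a = r s a + (γ - γ') * ∑ s', p s a s' * v s')
    (hvstar' : vstar' = bellman p γ' r' vstar') (s : S) :
    vstar s - vstar' s ≤ (γ - γ') * β / (1 - γ') := by
  choose a ha using fun s => exists_bellman_eq (p := p) γ r vstar s
  refine le_div_one_sub_of_le_add_mul_sum (q := fun s => p s (a s))
    (fun s => hp0 s (a s)) (fun s => hp1 s (a s)) hγ'0 hγ'1
    (f := fun s => vstar s - vstar' s) (fun s => ?_) s
  have hbel := le_bellman (p := p) γ' r' vstar' s (a s)
  rw [← hvstar', hr'] at hbel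
  have hmean : ∑ s', p s (a s) s' * vstar s' ≤ ∑ s', p s (a s) s' * v s' + β :=
    sum_mul_le_sum_mul_add_s17 (hp0 s (a s)) (hp1 s (a s)) fun s' => by linarith [hv s']
  have hvs : vstar s = r s (a s) + γ * ∑ s', p s (a s) s' * vstar s' := by
    rw [← ha, ← hvstar]
  simp only [mul_sub, sum_sub_distrib]
  nlinarith [mul_le_mul_of_nonneg_left hmean (sub_nonneg.2 hγ'γ)]

lemma policy_value_sub_policy_value_le
    (hp0 : ∀ s a s', 0 ≤ p s a s') (hp1 : ∀ s a, ∑ s', p s a s' = 1)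
    {γ γ' c : ℝ} (hγ'0 : 0 ≤ γ') (hγ'γ : γ' ≤ γ)
    (hγ1 : γ < 1) {r r' : (s : S) → A s → ℝ} {v w u : S → ℝ} {π : (s : S) → A s}
    (hr' : ∀ s a, r' s a = r s a + (γ - γ') * ∑ s', p s a s' * v s')
    (hw : ∀ s, w s = r' s (π s) + γ' * ∑ s', p s (π s) s' * w s')
    (hu : ∀ s, u s = r s (π s) + γ * ∑ s', p s (π s) s' * u s')
    (hvw : ∀ s, v s ≤ w s + c) (s : S) :
    w s - u s ≤ (γ - γ') * c / (1 - γ) := by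
  refine le_div_one_sub_of_le_add_mul_sum (q := fun s => p s (π s))
    (fun s => hp0 s (π s)) (fun s => hp1 s (π s)) (hγ'0.trans hγ'γ) hγ1
    (f := fun s => w s - u s) (fun s => ?_) s
  have hmean : ∑ s', p s (π s) s' * v s' ≤ ∑ s', p s (π s) s' * w s' + c :=
    sum_mul_le_sum_mul_add_s17 (hp0 s (π s)) (hp1 s (π s)) hvw
  simp only [mul_sub, sum_sub_distrib]
  nlinarith [mul_le_mul_of_nonneg_left hmean (sub_nonneg.2 hγ'γ), hw s, hu s, hr' s (π s)]

end Bellman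

theorem stmt17_general {S : Type*} [Fintype S] {A : S → Type*}
    [∀ s, Fintype (A s)]
    (p : (s : S) → A s → S → ℝ)
    (hp0 : ∀ s a s', 0 ≤ p s a s') (hp1 : ∀ s a, ∑ s' : S, p s a s' = 1)
    (γ γ' : ℝ) (hγ'0 : 0 < γ') (hγ'γ : γ' ≤ γ) (hγ1 : γ < 1)
    (α β : ℝ)
    (r : (s : S) → A s → ℝ)
    (vstar : S → ℝ) (hvstar : vstar = bellman p γ r vstar)
    (v : S → ℝ) (hv : ∀ s, vstar s - β ≤ v s ∧ v s ≤ vstar s)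
    (r' : (s : S) → A s → ℝ)
    (hr' : ∀ s a, r' s a = r s a + (γ - γ') * ∑ s' : S, p s a s' * v s')
    (vstar' : S → ℝ) (hvstar' : vstar' = bellman p γ' r' vstar')
    (π : (s : S) → A s)
    (w : S → ℝ) (hw : ∀ s, w s = r' s (π s) + γ' * ∑ s' : S, p s (π s) s' * w s')
    (hwopt : ∀ s, vstar' s - α ≤ w s)
    (u : S → ℝ) (hu : ∀ s, u s = r s (π s) + γ * ∑ s' : S, p s (π s) s' * u s') :
    ∀ s : S, u s ≤ vstar s ∧
      vstar s - (α * (1 - γ') + (γ - γ') * β) / (1 - γ) ≤ u s := by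
  have : ∀ s, Nonempty (A s) := fun s => ⟨π s⟩
  set b := (γ - γ') * β / (1 - γ') with hb
  have hopt : ∀ s, vstar s - vstar' s ≤ b :=
    eq_bellman_sub_eq_bellman_le hp0 hp1 hγ'0.le hγ'γ (hγ'γ.trans_lt hγ1) hvstar
      (fun s => (hv s).1) hr' hvstar'
  have hvw : ∀ s, v s ≤ w s + (α + b) := fun s => by
    linarith [(hv s).2, hopt s, hwopt s]
  intro s
  refine ⟨policy_value_le_of_eq_bellman hp0 hp1 (hγ'0.le.trans hγ'γ) hγ1 hvstar hu s, ?_⟩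
  have hwu := policy_value_sub_policy_value_le hp0 hp1 hγ'0.le hγ'γ hγ1 hr' hw hu hvw s
  have hsplit : b + α + (γ - γ') * (α + b) / (1 - γ)
      = (α * (1 - γ') + (γ - γ') * β) / (1 - γ) := by
    have : 1 - γ' ≠ 0 := by linarith
    have : 1 - γ ≠ 0 := by linarith
    rw [hb]
    field_simp
    ring
  linarith [hopt s, hwopt s]

/-- Policy extraction for the Proximal Reward Method: let `v*` be the fixed point
of `T_{γ,r}`, `v` a `β`-accurate underestimate of `v*`, and `v*'` the fixed point of
`T_{γ',r'}` for the adjusted reward `r'(s,a) = r(s,a) + (γ - γ')·(Pv)(s,a)`. If the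
`(γ', r')`-value `w` of a policy `π` satisfies `w ≥ v*' - α`, then the `(γ, r)`-value
`u` of `π` satisfies `v* - (α(1-γ') + (γ-γ')β)/(1-γ) ≤ u ≤ v*` entrywise. -/
theorem stmt17 {S : Type*} [Fintype S] [Nonempty S] {A : S → Type*}
    [∀ s, Fintype (A s)] [∀ s, Nonempty (A s)]
    (p : (s : S) → A s → S → ℝ)
    (hp0 : ∀ s a s', 0 ≤ p s a s') (hp1 : ∀ s a, ∑ s' : S, p s a s' = 1)
    (γ γ' : ℝ) (hγ'0 : 0 < γ') (hγ'γ : γ' ≤ γ) (hγ1 : γ < 1)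
    (α β : ℝ) (hα : 0 ≤ α) (hβ : 0 ≤ β)
    (r : (s : S) → A s → ℝ)
    (vstar : S → ℝ) (hvstar : vstar = bellman p γ r vstar)
    (v : S → ℝ) (hv : ∀ s, vstar s - β ≤ v s ∧ v s ≤ vstar s)
    (r' : (s : S) → A s → ℝ)
    (hr' : ∀ s a, r' s a = r s a + (γ - γ') * ∑ s' : S, p s a s' * v s')
    (vstar' : S → ℝ) (hvstar' : vstar' = bellman p γ' r' vstar')
    (π : (s : S) → A s)
    (w : S → ℝ) (hw : ∀ s, w s = r' s (π s) + γ' * ∑ s' : S, p s (π s) s' * w s')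
    (hwopt : ∀ s, vstar' s - α ≤ w s)
    (u : S → ℝ) (hu : ∀ s, u s = r s (π s) + γ * ∑ s' : S, p s (π s) s' * u s') :
    ∀ s : S, u s ≤ vstar s ∧
      vstar s - (α * (1 - γ') + (γ - γ') * β) / (1 - γ) ≤ u s :=
  stmt17_general p hp0 hp1 γ γ' hγ'0 hγ'γ hγ1 α β r vstar hvstar v hv r' hr' vstar' hvstar' π w hw
    hwopt u hu
end
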